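/- arXiv:2508.05455 — 11 statements merged into one kernel-verified Lean document; each statement's English description precedes it below -/
import Mathlib

section
/- Let p be a prime and let R be a ring with exactly p² elements such that p•x = 0 for every x ∈ R. Then the following are equivalent: (i) R is the union of some finite family of proper two-sided ideals; (ii) every additive subgroup of R of order p is a two-sided ideal of R. Moreover, if these hold, then R is the union of p + 1 proper two-sided ideals, and R is not the union of any p proper two-sided ideals. -/
/-!
As `p • x = 0`, every `x ≠ 0` generates a subgroup `⟨x⟩` of order `p`, and by Lagrange
every proper subgroup of `R` has order `1` or `p`; so a proper ideal containing `x ≠ 0` is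
`⟨x⟩`, which gives (i) ⇒ (ii). The `p² - 1` nonzero elements are partitioned by the
punctured lines `⟨x⟩ \ {0}` of size `p - 1`, so there are exactly `p + 1` lines, and they
cover `R`. Conversely `p` proper subgroups contain at most `p (p - 1) < p² - 1` nonzero
elements.
-/

/-- A left ideal of a (possibly non-unital, non-commutative) ring `R`:
an additive subgroup closed under left multiplication by arbitrary ring elements. -/
def IsLeftIdeal {R : Type*} [NonUnitalRing R] (I : AddSubgroup R) : Prop :=
  ∀ (r : R) ⦃x : R⦄, x ∈ I → r * x ∈ I

/-- A right ideal of a (possibly non-unital, non-commutative) ring `R`: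
an additive subgroup closed under right multiplication by arbitrary ring elements. -/
def IsRightIdeal {R : Type*} [NonUnitalRing R] (I : AddSubgroup R) : Prop :=
  ∀ (r : R) ⦃x : R⦄, x ∈ I → x * r ∈ I

/-- A two-sided ideal: both a left and a right ideal. -/
def IsTwoSidedIdeal {R : Type*} [NonUnitalRing R] (I : AddSubgroup R) : Prop :=
  IsLeftIdeal I ∧ IsRightIdeal I

lemma Nat.card_compl_singleton {α : Type*} [Finite α] (a : α) :
    Nat.card ({a}ᶜ : Set α) = Nat.card α - 1 := by
  rw [Nat.card_coe_set_eq, Set.ncard_compl, Set.ncard_singleton]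

namespace AddSubgroup

variable {G : Type*} [AddGroup G] {p : ℕ}

lemma card_sdiff_zero (H : AddSubgroup G) [Finite H] :
    Nat.card ((H : Set G) \ {0} : Set G) = Nat.card H - 1 := by
  rw [Nat.card_coe_set_eq, Set.ncard_sdiff_singleton_of_mem H.zero_mem, ← Nat.card_coe_set_eq]
  rfl

lemma card_zmultiples_of_nsmul_eq_zero [Fact p.Prime] {x : G} (hpx : p • x = 0) (hx : x ≠ 0) :
    Nat.card (zmultiples x) = p := by
  rw [Nat.card_zmultiples, addOrderOf_eq_prime hpx hx]

lemma eq_zmultiples_of_card_eq_prime (hp : p.Prime) {H : AddSubgroup G} (hH : Nat.card H = p)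
    {x : G} (hxH : x ∈ H) (hx : x ≠ 0) : H = zmultiples x := by
  have : Finite H := Nat.finite_of_card_ne_zero (hH ▸ hp.ne_zero)
  have hle : zmultiples x ≤ H := zmultiples_le.mpr hxH
  have hdvd : Nat.card (zmultiples x) ∣ p := hH ▸ card_dvd_of_le hle
  have hne : Nat.card (zmultiples x) ≠ 1 := by
    rwa [Nat.card_zmultiples, Ne, AddMonoid.addOrderOf_eq_one_iff]
  refine (eq_of_le_of_card_ge hle ?_).symm
  rw [hH, (hp.eq_one_or_self_of_dvd _ hdvd).resolve_left hne]

lemma card_le_of_ne_top [Finite G] (hp : p.Prime) (hG : Nat.card G = p ^ 2) {H : AddSubgroup G}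
    (hH : H ≠ ⊤) : Nat.card H ≤ p := by
  obtain ⟨k, hk, hHk⟩ := (Nat.dvd_prime_pow hp).mp (hG ▸ card_addSubgroup_dvd_card H)
  interval_cases k
  · simp [hHk, hp.one_le]
  · simp [hHk]
  · exact absurd ((card_eq_iff_eq_top H).mp (hHk.trans hG.symm)) hH

lemma card_sub_one_le_sum_of_forall_exists_mem [Finite G] {ι : Type*} [Fintype ι]
    (f : ι → AddSubgroup G) (hf : ∀ x, ∃ i, x ∈ f i) :
    Nat.card G - 1 ≤ ∑ i, (Nat.card (f i) - 1) := by
  let g : (Σ i, ((f i : Set G) \ {0} : Set G)) → ({0}ᶜ : Set G) :=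
    fun y => ⟨y.2, y.2.2.2⟩
  have hg : Function.Surjective g := fun x =>
    let ⟨i, hi⟩ := hf x
    ⟨⟨i, x, hi, x.2⟩, rfl⟩
  calc Nat.card G - 1 = Nat.card ({0}ᶜ : Set G) := (Nat.card_compl_singleton 0).symm
    _ ≤ Nat.card (Σ i, ((f i : Set G) \ {0} : Set G)) := Nat.card_le_card_of_surjective g hg
    _ = ∑ i, (Nat.card (f i) - 1) := by simp only [Nat.card_sigma, card_sdiff_zero]

section Exponent

variable [Finite G] [hp : Fact p.Prime] (hchar : ∀ x : G, p • x = 0)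
include hchar

lemma card_subgroups_of_card_prime_mul :
    Nat.card {H : AddSubgroup G // Nat.card H = p} * (p - 1) = Nat.card G - 1 := by
  classical
  have := Fintype.ofFinite {H : AddSubgroup G // Nat.card H = p}
  let e : ({0}ᶜ : Set G) ≃
      Σ L : {H : AddSubgroup G // Nat.card H = p}, ((L.1 : Set G) \ {0} : Set G) :=
    { toFun := fun x => ⟨⟨zmultiples x.1, card_zmultiples_of_nsmul_eq_zero (hchar x.1) x.2⟩,
        x.1, mem_zmultiples x.1, x.2⟩
      invFun := fun y => ⟨y.2, y.2.2.2⟩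
      left_inv := fun _ => rfl
      right_inv := fun ⟨L, x, hxL, hx⟩ => Sigma.subtype_ext
        (Subtype.ext (eq_zmultiples_of_card_eq_prime hp.out L.2 hxL hx).symm) rfl }
  rw [← Nat.card_compl_singleton (0 : G), Nat.card_congr e, Nat.card_sigma]
  simp only [card_sdiff_zero]
  rw [Finset.sum_congr rfl fun L _ => congrArg (· - 1) L.2, Finset.sum_const, smul_eq_mul,
    Finset.card_univ, Nat.card_eq_fintype_card]

lemma card_subgroups_of_card_prime_of_card_eq_sq (hG : Nat.card G = p ^ 2) :
    Nat.card {H : AddSubgroup G // Nat.card H = p} = p + 1 := by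
  have hp1 : 0 < p - 1 := Nat.sub_pos_of_lt hp.out.one_lt
  refine Nat.eq_of_mul_eq_mul_right hp1 ?_
  rw [card_subgroups_of_card_prime_mul hchar, hG, ← Nat.sq_sub_sq, one_pow]

lemma exists_fin_cover_of_card_eq_sq (hG : Nat.card G = p ^ 2) :
    ∃ f : Fin (p + 1) → AddSubgroup G,
      (∀ i, Nat.card (f i) = p) ∧ ∀ x, ∃ i, x ∈ f i := by
  let e := Finite.equivFinOfCardEq (card_subgroups_of_card_prime_of_card_eq_sq hchar hG)
  refine ⟨fun i => (e.symm i).1, fun i => (e.symm i).2, fun x => ?_⟩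
  by_cases hx : x = 0
  · exact ⟨0, hx ▸ zero_mem _⟩
  · refine ⟨e ⟨zmultiples x, card_zmultiples_of_nsmul_eq_zero (hchar x) hx⟩, ?_⟩
    simpa only [Equiv.symm_apply_apply] using mem_zmultiples x

end Exponent

lemma not_forall_exists_mem_of_card_eq_sq [Finite G] (hp : p.Prime) (hG : Nat.card G = p ^ 2)
    {ι : Type*} [Fintype ι] (hι : Fintype.card ι ≤ p) (f : ι → AddSubgroup G)
    (hf : ∀ i, f i ≠ ⊤) : ¬ ∀ x, ∃ i, x ∈ f i := by
  intro hcov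
  have hle : p ^ 2 - 1 ≤ p * (p - 1) := calc
    p ^ 2 - 1 = Nat.card G - 1 := by rw [hG]
    _ ≤ ∑ i, (Nat.card (f i) - 1) := card_sub_one_le_sum_of_forall_exists_mem f hcov
    _ ≤ ∑ _i : ι, (p - 1) :=
      Finset.sum_le_sum fun i _ => Nat.sub_le_sub_right (card_le_of_ne_top hp hG (hf i)) 1
    _ = Fintype.card ι * (p - 1) := by rw [Finset.sum_const, Finset.card_univ, smul_eq_mul]
    _ ≤ p * (p - 1) := Nat.mul_le_mul_right _ hι
  rw [Nat.mul_sub_one, ← sq] at hle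
  have := hp.two_le
  have := Nat.le_self_pow two_ne_zero p
  omega

end AddSubgroup

lemma isTwoSidedIdeal_of_card_eq_prime_of_forall_exists_mem {R : Type*} [NonUnitalRing R]
    [Finite R] {p : ℕ} (hp : p.Prime) (hR : Nat.card R = p ^ 2) {ι : Type*}
    (f : ι → AddSubgroup R) (hf : ∀ i, IsTwoSidedIdeal (f i) ∧ f i ≠ ⊤)
    (hcov : ∀ x, ∃ i, x ∈ f i) {I : AddSubgroup R} (hI : Nat.card I = p) :
    IsTwoSidedIdeal I := by
  obtain ⟨x, hxI, hx⟩ := I.bot_or_exists_ne_zero.resolve_left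
    fun h => hp.one_lt.ne (by simpa [h] using hI)
  obtain ⟨i, hxi⟩ := hcov x
  have hle : I ≤ f i := AddSubgroup.eq_zmultiples_of_card_eq_prime hp hI hxI hx ▸
    AddSubgroup.zmultiples_le.mpr hxi
  have hIi : I = f i := AddSubgroup.eq_of_le_of_card_ge hle
    (hI ▸ AddSubgroup.card_le_of_ne_top hp hR (hf i).2)
  exact hIi ▸ (hf i).1

lemma exists_fin_cover_isTwoSidedIdeal {R : Type*} [NonUnitalRing R] [Finite R] {p : ℕ}
    [Fact p.Prime] (hR : Nat.card R = p ^ 2) (hchar : ∀ x : R, p • x = 0)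
    (hlines : ∀ I : AddSubgroup R, Nat.card I = p → IsTwoSidedIdeal I) :
    ∃ f : Fin (p + 1) → AddSubgroup R,
      (∀ i, IsTwoSidedIdeal (f i) ∧ f i ≠ ⊤) ∧ ∀ x : R, ∃ i, x ∈ f i := by
  obtain ⟨f, hfp, hcov⟩ := AddSubgroup.exists_fin_cover_of_card_eq_sq hchar hR
  refine ⟨f, fun i => ⟨hlines _ (hfp i), fun htop => ?_⟩, hcov⟩
  have hpp : Nat.card (f i) = p ^ 2 := by rw [htop, AddSubgroup.card_top, hR]
  rw [hfp i] at hpp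
  have := (Fact.out : p.Prime).two_le
  nlinarith

/-- For a ring `R` of order `p²` (with `p • x = 0` for all `x`), being a union of
finitely many proper two-sided ideals is equivalent to every additive subgroup of
order `p` being a two-sided ideal; and in that case `R` is the union of `p + 1`
proper two-sided ideals but not of any `p` proper two-sided ideals. -/
theorem two_sided_ideal_cover_of_order_p_sq (p : ℕ) (hp : p.Prime)
    (R : Type*) [NonUnitalRing R] (hcard : Nat.card R = p ^ 2)
    (hchar : ∀ x : R, p • x = 0) :
    ((∃ (n : ℕ) (f : Fin n → AddSubgroup R),
        (∀ i, IsTwoSidedIdeal (f i) ∧ f i ≠ ⊤) ∧ ∀ x : R, ∃ i, x ∈ f i) ↔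
      (∀ I : AddSubgroup R, Nat.card I = p → IsTwoSidedIdeal I)) ∧
    ((∀ I : AddSubgroup R, Nat.card I = p → IsTwoSidedIdeal I) →
      (∃ f : Fin (p + 1) → AddSubgroup R,
        (∀ i, IsTwoSidedIdeal (f i) ∧ f i ≠ ⊤) ∧ ∀ x : R, ∃ i, x ∈ f i) ∧
      ¬ ∃ f : Fin p → AddSubgroup R,
        (∀ i, IsTwoSidedIdeal (f i) ∧ f i ≠ ⊤) ∧ ∀ x : R, ∃ i, x ∈ f i) := by
  have : Fact p.Prime := ⟨hp⟩
  have : Finite R := Nat.finite_of_card_ne_zero (hcard ▸ pow_ne_zero 2 hp.ne_zero)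
  refine ⟨⟨fun ⟨_, f, hf, hcov⟩ _ =>
      isTwoSidedIdeal_of_card_eq_prime_of_forall_exists_mem hp hcard f hf hcov,
    fun hlines => ⟨p + 1, exists_fin_cover_isTwoSidedIdeal hcard hchar hlines⟩⟩,
    fun hlines => ⟨exists_fin_cover_isTwoSidedIdeal hcard hchar hlines, ?_⟩⟩
  rintro ⟨f, hf, hcov⟩
  exact AddSubgroup.not_forall_exists_mem_of_card_eq_sq hp hcard (by simp) f
    (fun i => (hf i).2) hcov
end

section
/- Let p be a prime and let R be a ring with exactly p² elements such that p•x = 0 for every x ∈ R and x·y = 0 for all x, y ∈ R. Then R is the union of p + 1 proper two-sided ideals, and R is not the union of any p proper two-sided ideals. -/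
/-!
Zero multiplication makes every additive subgroup a two-sided ideal, so the question is about
covering the group `(ℤ/p)²` by proper subgroups. Its `p + 1` lines through the origin cover it.
Conversely, by Lagrange every proper subgroup has order at most `p`, and since all of them
contain `0`, `p` of them cover at most `1 + p (p - 1) < p²` elements.
-/

open Module Submodule

theorem isTwoSidedIdeal_of_mul_eq_zero {R : Type*} [NonUnitalRing R]
    (hmul : ∀ x y : R, x * y = 0) (I : AddSubgroup R) : IsTwoSidedIdeal I :=
  ⟨fun r x _ => hmul r x ▸ I.zero_mem, fun r x _ => hmul x r ▸ I.zero_mem⟩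

theorem AddSubgroup.card_sub_one_le_sum_of_covers {G ι : Type*} [AddGroup G] [Finite G]
    [Fintype ι] (f : ι → AddSubgroup G) (hcov : ∀ x, ∃ i, x ∈ f i) :
    Nat.card G - 1 ≤ ∑ i, (Nat.card (f i) - 1) := by
  classical
  have := Fintype.ofFinite G
  have hsub : Finset.univ.erase (0 : G) ⊆
      Finset.univ.biUnion fun i => (f i : Set G).toFinset.erase 0 := by
    intro x hx
    obtain ⟨i, hi⟩ := hcov x
    simp only [Finset.mem_erase, Finset.mem_univ, and_true] at hx
    simpa [hx] using ⟨i, hi⟩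
  calc Nat.card G - 1 = (Finset.univ.erase (0 : G)).card := by
        simp [Finset.card_erase_of_mem, Nat.card_eq_fintype_card]
    _ ≤ ∑ i, ((f i : Set G).toFinset.erase 0).card :=
        (Finset.card_le_card hsub).trans Finset.card_biUnion_le
    _ = ∑ i, (Nat.card (f i) - 1) := by
        simp [Finset.card_erase_of_mem]

theorem AddSubgroup.card_le_of_card_eq_sq {G : Type*} [AddGroup G] {p : ℕ} (hp : p.Prime)
    (hG : Nat.card G = p ^ 2) {H : AddSubgroup G} (hH : H ≠ ⊤) : Nat.card H ≤ p := by
  have : Finite G := Nat.finite_of_card_ne_zero (by simp [hG, hp.ne_zero])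
  obtain ⟨k, hk, hHk⟩ := (Nat.dvd_prime_pow hp).1 (hG ▸ H.card_addSubgroup_dvd_card)
  interval_cases k
  · simpa [hHk] using hp.one_le
  · simp [hHk]
  · exact absurd (H.eq_top_of_card_eq (hHk.trans hG.symm)) hH

theorem AddSubgroup.not_covers_of_card_eq_sq {G : Type*} [AddGroup G] {p : ℕ} (hp : p.Prime)
    (hG : Nat.card G = p ^ 2) (f : Fin p → AddSubgroup G) (hf : ∀ i, f i ≠ ⊤) :
    ¬ ∀ x, ∃ i, x ∈ f i := by
  intro hcov
  have : Finite G := Nat.finite_of_card_ne_zero (by simp [hG, hp.ne_zero])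
  have hsum : ∑ i, (Nat.card (f i) - 1) ≤ p * (p - 1) := by
    simpa using Finset.sum_le_card_nsmul Finset.univ _ (p - 1)
      fun i _ => Nat.sub_le_sub_right (card_le_of_card_eq_sq hp hG (hf i)) 1
  have := (card_sub_one_le_sum_of_covers f hcov).trans hsum
  rw [hG] at this
  have h2 := hp.two_le
  zify [h2, Nat.one_le_pow 2 p hp.pos, (by omega : 1 ≤ p)] at this
  nlinarith

section Plane

variable {K V : Type*} [Field K] [AddCommGroup V] [Module K V]

theorem Submodule.span_singleton_ne_top_of_one_lt_finrank (h : 1 < finrank K V) (v : V) :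
    K ∙ v ≠ ⊤ := by
  intro htop
  have := finrank_span_le_card (R := K) ({v} : Set V)
  rw [htop, finrank_top, Set.toFinset_singleton, Finset.card_singleton] at this
  omega

def Module.Basis.line (b : Basis (Fin 2) K V) : Option K → Submodule K V
  | none => K ∙ b 1
  | some t => K ∙ (b 0 + t • b 1)

theorem Module.Basis.exists_mem_line (b : Basis (Fin 2) K V) (x : V) : ∃ o, x ∈ b.line o := by
  have hx : b.repr x 0 • b 0 + b.repr x 1 • b 1 = x := by
    rw [← Fin.sum_univ_two (f := fun i => b.repr x i • b i), b.sum_repr]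
  by_cases ha : b.repr x 0 = 0
  · refine ⟨none, mem_span_singleton.2 ⟨b.repr x 1, ?_⟩⟩
    simpa [ha] using hx
  · refine ⟨some (b.repr x 1 / b.repr x 0), mem_span_singleton.2 ⟨b.repr x 0, ?_⟩⟩
    rw [smul_add, smul_smul, mul_div_cancel₀ _ ha, hx]

theorem Module.Basis.line_ne_top (b : Basis (Fin 2) K V) (o : Option K) : b.line o ≠ ⊤ := by
  have : 1 < finrank K V := by simp [finrank_eq_card_basis b]
  cases o <;> exact span_singleton_ne_top_of_one_lt_finrank this _

theorem Module.exists_covers_of_finrank_eq_two [Fintype K] (h : finrank K V = 2) :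
    ∃ f : Fin (Fintype.card K + 1) → Submodule K V, (∀ i, f i ≠ ⊤) ∧ ∀ x, ∃ i, x ∈ f i := by
  have : Module.Finite K V := Module.finite_of_finrank_eq_succ h
  let b := Module.finBasisOfFinrankEq K V h
  let e := (Fintype.equivFinOfCardEq (Fintype.card_option (α := K))).symm
  refine ⟨fun i => b.line (e i), fun i => b.line_ne_top _, fun x => ?_⟩
  obtain ⟨o, ho⟩ := b.exists_mem_line x
  exact ⟨e.symm o, by simpa using ho⟩

end Plane

theorem AddCommGroup.exists_covers_of_card_eq_sq {V : Type*} [AddCommGroup V] {p : ℕ}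
    (hp : p.Prime) (hV : Nat.card V = p ^ 2) (hchar : ∀ x : V, p • x = 0) :
    ∃ f : Fin (p + 1) → AddSubgroup V, (∀ i, f i ≠ ⊤) ∧ ∀ x, ∃ i, x ∈ f i := by
  have : Fact p.Prime := ⟨hp⟩
  obtain ⟨_⟩ : Nonempty (Module (ZMod p) V) := ⟨AddCommGroup.zmodModule hchar⟩
  have : Finite V := Nat.finite_of_card_ne_zero (by simp [hV, hp.ne_zero])
  have := Fintype.ofFinite V
  have hrank : finrank (ZMod p) V = 2 := by
    have := Module.card_eq_pow_finrank (K := ZMod p) (V := V)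
    rw [ZMod.card, ← Nat.card_eq_fintype_card, hV] at this
    exact Nat.pow_right_injective hp.two_le this.symm
  have hcover := Module.exists_covers_of_finrank_eq_two hrank
  rw [ZMod.card] at hcover
  obtain ⟨f, hf, hcov⟩ := hcover
  exact ⟨fun i => (f i).toAddSubgroup, fun i => by simpa using hf i, hcov⟩

/-- A ring of order `p²` with `p • x = 0` for all `x` and zero multiplication is
the union of `p + 1` proper two-sided ideals, but not of any `p` proper
two-sided ideals. -/
theorem zero_mul_ring_ideal_covering_number (p : ℕ) (hp : p.Prime)
    (R : Type*) [NonUnitalRing R] (hcard : Nat.card R = p ^ 2)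
    (hchar : ∀ x : R, p • x = 0) (hmul : ∀ x y : R, x * y = 0) :
    (∃ f : Fin (p + 1) → AddSubgroup R,
      (∀ i, IsTwoSidedIdeal (f i) ∧ f i ≠ ⊤) ∧ ∀ x : R, ∃ i, x ∈ f i) ∧
    ¬ ∃ f : Fin p → AddSubgroup R,
      (∀ i, IsTwoSidedIdeal (f i) ∧ f i ≠ ⊤) ∧ ∀ x : R, ∃ i, x ∈ f i := by
  obtain ⟨f, hf, hcov⟩ := AddCommGroup.exists_covers_of_card_eq_sq hp hcard hchar
  refine ⟨⟨f, fun i => ⟨isTwoSidedIdeal_of_mul_eq_zero hmul _, hf i⟩, hcov⟩, ?_⟩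
  rintro ⟨g, hg, hcov⟩
  exact AddSubgroup.not_covers_of_card_eq_sq hp hcard g (fun i => (hg i).2) hcov
end

section
/- Let p be a prime and let R be a ring with exactly p² elements containing elements a, b such that p•a = 0, p•b = 0, the additive group of R is generated by a and b, and a² = a, b² = b, ab = b, ba = a. Then R is the union of p + 1 proper left ideals, and R is not the union of any p proper left ideals. -/
open Submodule

section LeftIdentities

variable {R : Type*} [NonUnitalRing R] {S : Set R}

theorem mul_eq_self_of_closure_eq_top (hS : AddSubgroup.closure S = ⊤) {e : R}
    (he : ∀ s ∈ S, e * s = s) (y : R) : e * y = y := by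
  have hle : AddSubgroup.closure S ≤ (AddMonoidHom.mulLeft e).eqLocus (AddMonoidHom.id R) :=
    (AddSubgroup.closure_le _).mpr he
  exact (hS ▸ hle) (AddSubgroup.mem_top y)

theorem mul_mem_zmultiples_of_closure_eq_top (hS : AddSubgroup.closure S = ⊤)
    (hleft : ∀ s ∈ S, ∀ t ∈ S, s * t = t) (x y : R) :
    x * y ∈ AddSubgroup.zmultiples y := by
  have hle : AddSubgroup.closure S ≤
      (AddSubgroup.zmultiples y).comap (AddMonoidHom.mulRight y) := by
    refine (AddSubgroup.closure_le _).mpr fun s hs => ?_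
    show s * y ∈ AddSubgroup.zmultiples y
    rw [mul_eq_self_of_closure_eq_top hS (hleft s hs) y]
    exact AddSubgroup.mem_zmultiples y
  exact (hS ▸ hle) (AddSubgroup.mem_top x)

theorem isLeftIdeal_of_mul_mem_zmultiples
    (h : ∀ x y : R, x * y ∈ AddSubgroup.zmultiples y) (I : AddSubgroup R) : IsLeftIdeal I :=
  fun r x hx => AddSubgroup.zmultiples_le_of_mem hx (h r x)

end LeftIdentities

section AdditiveGroups

theorem nsmul_eq_zero_of_closure_eq_top {G : Type*} [AddCommGroup G] {S : Set G}
    (hS : AddSubgroup.closure S = ⊤) {n : ℕ} (h : ∀ s ∈ S, n • s = 0) (x : G) :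
    n • x = 0 := by
  have hle : AddSubgroup.closure S ≤ (nsmulAddMonoidHom n).ker :=
    (AddSubgroup.closure_le _).mpr h
  exact (hS ▸ hle) (AddSubgroup.mem_top x)

variable {G : Type*} [AddGroup G]

theorem card_le_of_forall_exists_mem_addSubgroup [Finite G] {ι : Type*} [Fintype ι]
    (H : ι → AddSubgroup G) {m : ℕ} (hH : ∀ i, Nat.card (H i) ≤ m)
    (hcover : ∀ x, ∃ i, x ∈ H i) : Nat.card G ≤ Fintype.card ι * (m - 1) + 1 := by
  have hsub : (Set.univ \ {0} : Set G) ⊆ ⋃ i, (H i : Set G) \ {0} := by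
    rintro x ⟨-, hx⟩
    obtain ⟨i, hi⟩ := hcover x
    exact Set.mem_iUnion.mpr ⟨i, hi, hx⟩
  have hpunctured (i : ι) : ((H i : Set G) \ {0}).ncard ≤ m - 1 := by
    have hsucc := Set.ncard_sdiff_singleton_add_one (H i).zero_mem (Set.toFinite _)
    have hHi : (H i : Set G).ncard ≤ m := (Nat.card_coe_set_eq _).symm.trans_le (hH i)
    omega
  calc Nat.card G = (Set.univ \ {0} : Set G).ncard + 1 := by
        rw [Set.ncard_sdiff_singleton_add_one (Set.mem_univ 0), Set.ncard_univ]
    _ ≤ (⋃ i, (H i : Set G) \ {0}).ncard + 1 := by gcongr; exact Set.toFinite _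
    _ ≤ ∑ i, ((H i : Set G) \ {0}).ncard + 1 := by
        gcongr; exact Set.ncard_iUnion_le_of_fintype _
    _ ≤ ∑ _i : ι, (m - 1) + 1 := by gcongr with i; exact hpunctured i
    _ = Fintype.card ι * (m - 1) + 1 := by simp

theorem card_addSubgroup_le_of_card_eq_sq {p : ℕ} (hp : p.Prime) (hG : Nat.card G = p ^ 2)
    {H : AddSubgroup G} (hH : H ≠ ⊤) : Nat.card H ≤ p := by
  obtain ⟨k, hk, hHk⟩ := (Nat.dvd_prime_pow hp).mp (hG ▸ H.card_addSubgroup_dvd_card)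
  have : Finite G := Nat.finite_of_card_ne_zero (by rw [hG]; exact pow_ne_zero 2 hp.ne_zero)
  interval_cases k
  · simpa [hHk] using hp.one_le
  · simp [hHk]
  · exact absurd (H.eq_top_of_card_eq (by rw [hHk, hG])) hH

theorem zmultiples_ne_top_of_nsmul_eq_zero {n : ℕ} (hn : 0 < n) (hG : n < Nat.card G) {g : G}
    (hg : n • g = 0) : AddSubgroup.zmultiples g ≠ ⊤ := by
  intro htop
  have : Nat.card G ≤ n := by
    rw [← AddSubgroup.card_top, ← htop, Nat.card_zmultiples]
    exact addOrderOf_le_of_nsmul_eq_zero hn hg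
  omega

end AdditiveGroups

section ProjectiveLine

variable {K V : Type*} [DivisionRing K] [AddCommGroup V] [Module K V]

/-- The lines of the plane spanned by `a` and `b`, indexed by the projective line `K ∪ {∞}`. -/
def pairLineDirection (a b : V) : Option K → V
  | none => b
  | some c => a + c • b

theorem exists_mem_span_pairLineDirection {a b : V} (h : span K {a, b} = ⊤) (x : V) :
    ∃ c : Option K, x ∈ K ∙ pairLineDirection a b c := by
  obtain ⟨m, n, rfl⟩ := mem_span_pair.mp (h ▸ mem_top : x ∈ span K {a, b})
  by_cases hm : m = 0
  · exact ⟨none, mem_span_singleton.mpr ⟨n, by simp [pairLineDirection, hm]⟩⟩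
  · refine ⟨some (m⁻¹ * n), mem_span_singleton.mpr ⟨m, ?_⟩⟩
    rw [pairLineDirection, smul_add, smul_smul, mul_inv_cancel_left₀ hm]

end ProjectiveLine

/-- The ring `R₂` of order `p²` with presentation `a² = a, b² = b, ab = b, ba = a`
is the union of `p + 1` proper left ideals, but not of any `p` proper left ideals. -/
theorem left_ideal_covering_number_of_R2 (p : ℕ) (hp : p.Prime)
    (R : Type*) [NonUnitalRing R] (hcard : Nat.card R = p ^ 2) (a b : R)
    (ha : p • a = 0) (hb : p • b = 0) (hgen : AddSubgroup.closure {a, b} = ⊤)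
    (haa : a * a = a) (hbb : b * b = b) (hab : a * b = b) (hba : b * a = a) :
    (∃ f : Fin (p + 1) → AddSubgroup R,
      (∀ i, IsLeftIdeal (f i) ∧ f i ≠ ⊤) ∧ ∀ x : R, ∃ i, x ∈ f i) ∧
    ¬ ∃ f : Fin p → AddSubgroup R,
      (∀ i, IsLeftIdeal (f i) ∧ f i ≠ ⊤) ∧ ∀ x : R, ∃ i, x ∈ f i := by
  have : Fact p.Prime := ⟨hp⟩
  have hleft : ∀ I : AddSubgroup R, IsLeftIdeal I :=
    isLeftIdeal_of_mul_mem_zmultiples <| mul_mem_zmultiples_of_closure_eq_top hgen <| by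
      simp [haa, hbb, hab, hba]
  have hexp : ∀ x : R, p • x = 0 := nsmul_eq_zero_of_closure_eq_top hgen (by simp [ha, hb])
  have : Module (ZMod p) R := AddCommGroup.zmodModule hexp
  have hspan : span (ZMod p) {a, b} = ⊤ :=
    eq_top_iff'.mpr fun x => (AddSubgroup.closure_le (span (ZMod p) {a, b}).toAddSubgroup).mpr
      subset_span (hgen ▸ AddSubgroup.mem_top x)
  refine ⟨?_, ?_⟩
  · let e : Fin (p + 1) ≃ Option (ZMod p) := Fintype.equivOfCardEq (by simp)
    refine ⟨fun i => AddSubgroup.zmultiples (pairLineDirection a b (e i)),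
      fun i => ⟨hleft _, zmultiples_ne_top_of_nsmul_eq_zero hp.pos ?_ (hexp _)⟩, fun x => ?_⟩
    · rw [hcard]; exact lt_self_pow₀ hp.one_lt one_lt_two
    · obtain ⟨c, hc⟩ := exists_mem_span_pairLineDirection hspan x
      obtain ⟨k, rfl⟩ := mem_span_singleton.mp hc
      exact ⟨e.symm c, by simpa using ZMod.smul_mem (AddSubgroup.mem_zmultiples _) k⟩
  · rintro ⟨f, hf, hcover⟩
    have : Finite R := Nat.finite_of_card_ne_zero (by rw [hcard]; exact pow_ne_zero 2 hp.ne_zero)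
    have hbound := card_le_of_forall_exists_mem_addSubgroup f
      (fun i => card_addSubgroup_le_of_card_eq_sq hp hcard (hf i).2) hcover
    rw [hcard, Fintype.card_fin] at hbound
    obtain ⟨q, rfl⟩ := Nat.exists_eq_add_one_of_ne_zero hp.ne_zero
    have := hp.two_le
    simp only [add_tsub_cancel_right] at hbound
    nlinarith
end

section
/- Let p be a prime and let R be a ring with exactly p² elements containing elements a, b such that p•a = 0, p•b = 0, the additive group of R is generated by a and b, and a² = a, b² = b, ab = b, ba = a. Then R is not the union of any family of proper right ideals; in particular, R is not the union of any finite family of proper two-sided ideals. -/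
/-!
The relations `a * a = a` and `a * b = b` say that left multiplication by `a` fixes both
additive generators of `R`, so `a` is a left identity. A right ideal containing a left
identity is all of `R`, so no family of proper right ideals can contain `a`.
-/

theorem mul_eq_of_closure_eq_top {R : Type*} [NonUnitalNonAssocRing R] {s : Set R}
    (hs : AddSubgroup.closure s = ⊤) {e : R} (he : ∀ y ∈ s, e * y = y) (x : R) :
    e * x = x :=
  DFunLike.congr_fun
    (AddMonoidHom.eq_of_eqOn_dense hs (f := AddMonoidHom.mulLeft e) (g := AddMonoidHom.id R) he) x

theorem IsRightIdeal.eq_top_of_mem {R : Type*} [NonUnitalRing R] {I : AddSubgroup R}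
    (hI : IsRightIdeal I) {e : R} (he : ∀ x, e * x = x) (heI : e ∈ I) : I = ⊤ :=
  (AddSubgroup.eq_top_iff' I).2 fun x => he x ▸ hI x heI

theorem not_forall_exists_mem_of_isRightIdeal {R : Type*} [NonUnitalRing R] {e : R}
    (he : ∀ x, e * x = x) {ι : Sort*} (f : ι → AddSubgroup R)
    (hf : ∀ i, IsRightIdeal (f i) ∧ f i ≠ ⊤) : ¬ ∀ x : R, ∃ i, x ∈ f i := fun hcov =>
  let ⟨i, hi⟩ := hcov e
  (hf i).2 ((hf i).1.eq_top_of_mem he hi)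

theorem R2_not_union_of_right_ideals_general
    (R : Type*) [NonUnitalRing R] (a b : R)
    (hgen : AddSubgroup.closure {a, b} = ⊤)
    (haa : a * a = a) (hab : a * b = b) :
    (∀ (ι : Type*) (f : ι → AddSubgroup R),
      (∀ i, IsRightIdeal (f i) ∧ f i ≠ ⊤) → ¬ (∀ x : R, ∃ i, x ∈ f i)) ∧
    (∀ (n : ℕ) (f : Fin n → AddSubgroup R),
      (∀ i, IsTwoSidedIdeal (f i) ∧ f i ≠ ⊤) → ¬ (∀ x : R, ∃ i, x ∈ f i)) := by
  have ha : ∀ x, a * x = x := mul_eq_of_closure_eq_top hgen (by simp [haa, hab])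
  exact ⟨fun ι f hf => not_forall_exists_mem_of_isRightIdeal ha f hf,
    fun n f hf => not_forall_exists_mem_of_isRightIdeal ha f fun i => ⟨(hf i).1.2, (hf i).2⟩⟩

/-- The ring `R₂` of order `p²` with presentation `a² = a, b² = b, ab = b, ba = a`
is not the union of any family of proper right ideals; in particular it is not the
union of any finite family of proper two-sided ideals. -/
theorem R2_not_union_of_right_ideals (p : ℕ) (hp : p.Prime)
    (R : Type*) [NonUnitalRing R] (hcard : Nat.card R = p ^ 2) (a b : R)
    (ha : p • a = 0) (hb : p • b = 0) (hgen : AddSubgroup.closure {a, b} = ⊤)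
    (haa : a * a = a) (hbb : b * b = b) (hab : a * b = b) (hba : b * a = a) :
    (∀ (ι : Type*) (f : ι → AddSubgroup R),
      (∀ i, IsRightIdeal (f i) ∧ f i ≠ ⊤) → ¬ (∀ x : R, ∃ i, x ∈ f i)) ∧
    (∀ (n : ℕ) (f : Fin n → AddSubgroup R),
      (∀ i, IsTwoSidedIdeal (f i) ∧ f i ≠ ⊤) → ¬ (∀ x : R, ∃ i, x ∈ f i)) :=
  R2_not_union_of_right_ideals_general R a b hgen haa hab
end

section
/- Let p be a prime and let R be a ring with exactly p² elements containing elements a, b such that p•a = 0, p•b = 0, the additive group of R is generated by a and b, and a² = a, b² = b, ab = a, ba = b. Then R is the union of p + 1 proper right ideals, and R is not the union of any p proper right ideals. -/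
section RightIdentity

variable {R : Type*} [NonUnitalRing R] {S : Set R}

theorem mul_eq_left_of_closure_eq_top (hS : AddSubgroup.closure S = ⊤) {e : R}
    (he : ∀ s ∈ S, s * e = s) (x : R) : x * e = x :=
  DFunLike.congr_fun
    (AddMonoidHom.eq_of_eqOn_dense hS (f := AddMonoidHom.mulRight e) (g := .id R) he) x

theorem isRightIdeal_of_closure_eq_top (hS : AddSubgroup.closure S = ⊤)
    (hone : ∀ s ∈ S, ∀ x : R, x * s = x) (I : AddSubgroup R) : IsRightIdeal I := by
  intro r x hx
  have : AddSubgroup.closure S ≤ I.comap (AddMonoidHom.mulLeft x) :=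
    (AddSubgroup.closure_le _).2 fun s hs => by simpa [hone s hs x] using hx
  exact this (hS ▸ AddSubgroup.mem_top r)

end RightIdentity

section Lines

variable {G : Type*} [AddCommGroup G] {p : ℕ}

def cyclicLines (p : ℕ) (a b : G) : Fin (p + 1) → AddSubgroup G :=
  Fin.lastCases (AddSubgroup.zmultiples b) fun c => AddSubgroup.zmultiples (a + (c : ℕ) • b)

@[simp]
theorem cyclicLines_last (a b : G) : cyclicLines p a b (Fin.last p) = .zmultiples b :=
  Fin.lastCases_last

@[simp]
theorem cyclicLines_castSucc (a b : G) (c : Fin p) :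
    cyclicLines p a b c.castSucc = .zmultiples (a + (c : ℕ) • b) :=
  Fin.lastCases_castSucc c

theorem zsmul_eq_zsmul_of_modEq {b : G} (hb : p • b = 0) {m n : ℤ} (h : m ≡ n [ZMOD p]) :
    m • b = n • b := by
  rw [zsmul_eq_zsmul_iff_modEq]
  exact h.of_dvd (Int.natCast_dvd_natCast.2 (addOrderOf_dvd_of_nsmul_eq_zero hb))

theorem exists_mem_cyclicLines (hp : p.Prime) {a b x : G} (ha : p • a = 0) (hb : p • b = 0)
    (hx : x ∈ AddSubgroup.closure {a, b}) : ∃ i, x ∈ cyclicLines p a b i := by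
  have : Fact p.Prime := ⟨hp⟩
  obtain ⟨m, n, rfl⟩ := AddSubgroup.mem_closure_pair.1 hx
  by_cases hm : m ≡ 0 [ZMOD p]
  · refine ⟨Fin.last p, ?_⟩
    rw [cyclicLines_last]
    exact AddSubgroup.mem_zmultiples_iff.2 ⟨n, by simp [zsmul_eq_zsmul_of_modEq ha hm]⟩
  · replace hm : (m : ZMod p) ≠ 0 := by rwa [← Int.cast_zero, Ne, ZMod.intCast_eq_intCast_iff]
    -- `x = m • (a + c • b)` with `c ≡ n / m` modulo `p`
    set c := ((n : ZMod p) / m).val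
    refine ⟨Fin.castSucc ⟨c, ZMod.val_lt _⟩, ?_⟩
    rw [cyclicLines_castSucc]
    refine AddSubgroup.mem_zmultiples_iff.2 ⟨m, ?_⟩
    have hc : m * c ≡ n [ZMOD p] := by
      rw [← ZMod.intCast_eq_intCast_iff]
      push_cast
      simp [c, mul_div_cancel₀ _ hm]
    simp [smul_add, smul_smul, ← natCast_zsmul, zsmul_eq_zsmul_of_modEq hb hc]

theorem zmultiples_ne_top_of_nsmul_eq_zero_s7 (hp : 1 < p) (hG : Nat.card G = p ^ 2) {z : G}
    (hz : p • z = 0) : AddSubgroup.zmultiples z ≠ ⊤ := by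
  intro htop
  have : Nat.card G ≤ p := by
    rw [← AddSubgroup.card_top, ← htop, Nat.card_zmultiples]
    exact Nat.le_of_dvd (by omega) (addOrderOf_dvd_of_nsmul_eq_zero hz)
  nlinarith

theorem cyclicLines_ne_top (hp : 1 < p) (hG : Nat.card G = p ^ 2) {a b : G}
    (ha : p • a = 0) (hb : p • b = 0) (i : Fin (p + 1)) : cyclicLines p a b i ≠ ⊤ := by
  induction i using Fin.lastCases with
  | last => simpa using zmultiples_ne_top_of_nsmul_eq_zero_s7 hp hG hb
  | cast c =>
    simpa using zmultiples_ne_top_of_nsmul_eq_zero_s7 hp hG (by rw [smul_add, ha, smul_comm, hb]; simp)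

end Lines

section Covering

variable {G : Type*} [AddGroup G]

theorem card_le_sum_card_sub_one_add_one [Finite G] {ι : Type*} [Fintype ι]
    {f : ι → AddSubgroup G} (hf : ∀ x, ∃ i, x ∈ f i) :
    Nat.card G ≤ ∑ i, (Nat.card (f i) - 1) + 1 := by
  have hcover : {(0 : G)}ᶜ ⊆ ⋃ i, ((f i : Set G) \ {0}) := fun x hx => by
    obtain ⟨i, hi⟩ := hf x
    exact Set.mem_iUnion.2 ⟨i, hi, hx⟩
  have := (Set.ncard_le_ncard hcover).trans (Set.ncard_iUnion_le_of_fintype _)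
  simp only [Set.ncard_sdiff_singleton_of_mem (zero_mem _)] at this
  simp only [← SetLike.coe_sort_coe, Nat.card_coe_set_eq]
  rw [← Set.ncard_compl_add_ncard {0}, Set.ncard_singleton]
  omega

variable {p : ℕ}

theorem card_le_of_ne_top_of_card_eq_sq [Finite G] (hp : p.Prime) (hG : Nat.card G = p ^ 2)
    {H : AddSubgroup G} (hH : H ≠ ⊤) : Nat.card H ≤ p := by
  obtain ⟨k, hk, hHk⟩ := (Nat.dvd_prime_pow hp).1 (hG ▸ H.card_addSubgroup_dvd_card)
  have : k ≠ 2 := by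
    rintro rfl
    exact hH (AddSubgroup.eq_top_of_card_eq H (hHk.trans hG.symm))
  rw [hHk]
  exact pow_le_pow_right₀ hp.one_le (by omega) |>.trans_eq (pow_one p)

theorem exists_forall_notMem_of_card_eq_sq (hp : p.Prime) (hG : Nat.card G = p ^ 2)
    {f : Fin p → AddSubgroup G} (hf : ∀ i, f i ≠ ⊤) : ∃ x, ∀ i, x ∉ f i := by
  by_contra! hcover
  have : Finite G := Nat.finite_of_card_ne_zero (by simp [hG, hp.ne_zero])
  have hsum : ∑ i, (Nat.card (f i) - 1) ≤ p * (p - 1) :=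
    calc ∑ i, (Nat.card (f i) - 1) ≤ ∑ _i : Fin p, (p - 1) := Finset.sum_le_sum fun i _ =>
          Nat.sub_le_sub_right (card_le_of_ne_top_of_card_eq_sq hp hG (hf i)) 1
      _ = p * (p - 1) := by simp
  have := (card_le_sum_card_sub_one_add_one hcover).trans (Nat.add_le_add_right hsum 1)
  rw [hG, Nat.mul_sub_one, sq] at this
  have := hp.two_le
  have : p ≤ p * p := Nat.le_mul_self p
  omega

end Covering

/-- The ring `R₃` of order `p²` with presentation `a² = a, b² = b, ab = a, ba = b`
is the union of `p + 1` proper right ideals, but not of any `p` proper right ideals. -/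
theorem right_ideal_covering_number_of_R3 (p : ℕ) (hp : p.Prime)
    (R : Type*) [NonUnitalRing R] (hcard : Nat.card R = p ^ 2) (a b : R)
    (ha : p • a = 0) (hb : p • b = 0) (hgen : AddSubgroup.closure {a, b} = ⊤)
    (haa : a * a = a) (hbb : b * b = b) (hab : a * b = a) (hba : b * a = b) :
    (∃ f : Fin (p + 1) → AddSubgroup R,
      (∀ i, IsRightIdeal (f i) ∧ f i ≠ ⊤) ∧ ∀ x : R, ∃ i, x ∈ f i) ∧
    ¬ ∃ f : Fin p → AddSubgroup R,
      (∀ i, IsRightIdeal (f i) ∧ f i ≠ ⊤) ∧ ∀ x : R, ∃ i, x ∈ f i := by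
  have hright_one : ∀ s ∈ ({a, b} : Set R), ∀ x : R, x * s = x := by
    rintro s (rfl | rfl) <;>
      exact mul_eq_left_of_closure_eq_top hgen (by simp [haa, hbb, hab, hba])
  refine ⟨⟨cyclicLines p a b, fun i => ⟨isRightIdeal_of_closure_eq_top hgen hright_one _,
    cyclicLines_ne_top hp.one_lt hcard ha hb i⟩,
    fun x => exists_mem_cyclicLines hp ha hb (hgen ▸ AddSubgroup.mem_top x)⟩, ?_⟩
  rintro ⟨f, hf, hcover⟩
  obtain ⟨x, hx⟩ := exists_forall_notMem_of_card_eq_sq hp hcard fun i => (hf i).2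
  obtain ⟨i, hi⟩ := hcover x
  exact hx i hi
end

section
/- Let p be a prime and let R be a ring with exactly p² elements containing elements a, b such that p•a = 0, p•b = 0, the additive group of R is generated by a and b, and a² = a, b² = b, ab = a, ba = b. Then R is not the union of any family of proper left ideals; in particular, R is not the union of any finite family of proper two-sided ideals. -/
theorem IsLeftIdeal.eq_top_of_mem {R : Type*} [NonUnitalRing R] {I : AddSubgroup R}
    (hI : IsLeftIdeal I) {a b : R} (hgen : AddSubgroup.closure {a, b} = ⊤) (hba : b * a = b)
    (haI : a ∈ I) : I = ⊤ := by
  rw [eq_top_iff, ← hgen, AddSubgroup.closure_le, Set.insert_subset_iff,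
    Set.singleton_subset_iff, SetLike.mem_coe, ← hba]
  exact ⟨haI, hI b haI⟩

theorem R3_not_union_of_left_ideals_general
    (R : Type*) [NonUnitalRing R] (a b : R)
    (hgen : AddSubgroup.closure {a, b} = ⊤)
    (hba : b * a = b) :
    (∀ (ι : Type*) (f : ι → AddSubgroup R),
      (∀ i, IsLeftIdeal (f i) ∧ f i ≠ ⊤) → ¬ (∀ x : R, ∃ i, x ∈ f i)) ∧
    (∀ (n : ℕ) (f : Fin n → AddSubgroup R),
      (∀ i, IsTwoSidedIdeal (f i) ∧ f i ≠ ⊤) → ¬ (∀ x : R, ∃ i, x ∈ f i)) := by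
  have ha_not_mem {I : AddSubgroup R} (hI : IsLeftIdeal I) (hne : I ≠ ⊤) : a ∉ I :=
    fun haI ↦ hne (hI.eq_top_of_mem hgen hba haI)
  refine ⟨fun ι f hf hcover ↦ ?_, fun n f hf hcover ↦ ?_⟩
  · obtain ⟨i, hi⟩ := hcover a
    exact ha_not_mem (hf i).1 (hf i).2 hi
  · obtain ⟨i, hi⟩ := hcover a
    exact ha_not_mem (hf i).1.1 (hf i).2 hi

/-- The ring `R₃` of order `p²` with presentation `a² = a, b² = b, ab = a, ba = b`
is not the union of any family of proper left ideals; in particular it is not the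
union of any finite family of proper two-sided ideals. -/
theorem R3_not_union_of_left_ideals (p : ℕ) (hp : p.Prime)
    (R : Type*) [NonUnitalRing R] (hcard : Nat.card R = p ^ 2) (a b : R)
    (ha : p • a = 0) (hb : p • b = 0) (hgen : AddSubgroup.closure {a, b} = ⊤)
    (haa : a * a = a) (hbb : b * b = b) (hab : a * b = a) (hba : b * a = b) :
    (∀ (ι : Type*) (f : ι → AddSubgroup R),
      (∀ i, IsLeftIdeal (f i) ∧ f i ≠ ⊤) → ¬ (∀ x : R, ∃ i, x ∈ f i)) ∧
    (∀ (n : ℕ) (f : Fin n → AddSubgroup R),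
      (∀ i, IsTwoSidedIdeal (f i) ∧ f i ≠ ⊤) → ¬ (∀ x : R, ∃ i, x ∈ f i)) :=
  R3_not_union_of_left_ideals_general R a b hgen hba
end

section
/- Let p be a prime and let R be a ring with exactly p³ elements containing elements a, b, c such that p•a = p•b = p•c = 0, the additive group of R is generated by a, b, c, and a² = a, ba = b, ac = c, b² = c² = ab = bc = ca = cb = 0. Then the additive subgroup J generated by b is a two-sided ideal of R, and the quotient ring R/J has exactly p² elements and contains elements u, v with p•u = 0, p•v = 0, additively generating R/J, satisfying u² = u, v² = v, uv = v, vu = u. -/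
/-!
Every generator kills `b` from the left and multiplies it into `ℤ b` from the right, so
`J = ℤ b` is a two-sided ideal. In `R/J` the image of `b` vanishes and that of `c` is
`(a + c) - a`, so `u = a` and `v = a + c` generate `R/J` additively; as both are killed by `p`,
`|R/J| ≤ p²`. Together with `|J| ≤ p` and `|R/J| · |J| = |R| = p³` this forces `|R/J| = p²`.
-/

open AddSubgroup

theorem AddMonoidHom.map_mem_of_closure_eq_top {G H : Type*} [AddGroup G] [AddGroup H]
    (f : G →+ H) {s : Set G} (hs : closure s = ⊤) {K : AddSubgroup H}
    (h : ∀ x ∈ s, f x ∈ K) (g : G) : f g ∈ K :=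
  (closure_le (K := K.comap f)).mpr h (hs ▸ mem_top g)

theorem AddCommGroup.card_le_sq_of_closure_pair_eq_top {G : Type*} [AddCommGroup G] {n : ℕ}
    (hn : 0 < n) {x y : G} (hx : n • x = 0) (hy : n • y = 0) (h : closure {x, y} = ⊤) :
    Nat.card G ≤ n ^ 2 := by
  have hsurj : Function.Surjective
      (fun q : zmultiples x × zmultiples y => (q.1 : G) + q.2) := by
    intro z
    obtain ⟨k, l, rfl⟩ := mem_closure_pair.mp (h ▸ mem_top z)
    exact ⟨(⟨k • x, zsmul_mem_zmultiples x k⟩, ⟨l • y, zsmul_mem_zmultiples y l⟩), rfl⟩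
  have hcard : Nat.card (zmultiples x × zmultiples y) = addOrderOf x * addOrderOf y := by
    rw [Nat.card_prod, Nat.card_zmultiples, Nat.card_zmultiples]
  have : Finite (zmultiples x × zmultiples y) := Nat.finite_of_card_ne_zero <| by
    have hpos {z : G} (hz : n • z = 0) : addOrderOf z ≠ 0 :=
      (isOfFinAddOrder_iff_nsmul_eq_zero.mpr ⟨n, hn, hz⟩).addOrderOf_pos.ne'
    rw [hcard]
    exact Nat.mul_ne_zero (hpos hx) (hpos hy)
  calc Nat.card G ≤ addOrderOf x * addOrderOf y :=
        hcard ▸ Nat.card_le_card_of_surjective _ hsurj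
    _ ≤ n ^ 2 := sq n ▸ Nat.mul_le_mul (addOrderOf_le_of_nsmul_eq_zero hn hx)
        (addOrderOf_le_of_nsmul_eq_zero hn hy)

section NonUnitalRing

variable {R : Type*} [NonUnitalRing R]

theorem isTwoSidedIdeal_closure {s : Set R} (hleft : ∀ r, ∀ x ∈ s, r * x ∈ closure s)
    (hright : ∀ r, ∀ x ∈ s, x * r ∈ closure s) : IsTwoSidedIdeal (closure s) :=
  ⟨fun r _ hx => (closure_le (K := (closure s).comap (.mulLeft r))).mpr (hleft r) hx,
   fun r _ hx => (closure_le (K := (closure s).comap (.mulRight r))).mpr (hright r) hx⟩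

def IsTwoSidedIdeal.toTwoSidedIdeal {I : AddSubgroup R} (hI : IsTwoSidedIdeal I) :
    TwoSidedIdeal R :=
  .mk' I I.zero_mem I.add_mem I.neg_mem (fun hy => hI.1 _ hy) (fun hx => hI.2 _ hx)

theorem IsTwoSidedIdeal.coe_toTwoSidedIdeal {I : AddSubgroup R} (hI : IsTwoSidedIdeal I) :
    (hI.toTwoSidedIdeal : Set R) = I :=
  TwoSidedIdeal.coe_mk' ..

namespace TwoSidedIdeal

variable (J : TwoSidedIdeal R)

def mkQ : R →ₙ+* J.ringCon.Quotient where
  toFun := (↑)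
  map_mul' := RingCon.coe_mul J.ringCon
  map_zero' := rfl
  map_add' := RingCon.coe_add J.ringCon

theorem mkQ_surjective : Function.Surjective J.mkQ :=
  Quotient.mk''_surjective

theorem mkQ_eq_zero_iff {x : R} : J.mkQ x = 0 ↔ x ∈ J :=
  RingCon.eq J.ringCon

theorem card_eq_card_quotient_mul_card {I : AddSubgroup R} (hJI : (J : Set R) = I) :
    Nat.card R = Nat.card J.ringCon.Quotient * Nat.card I := by
  have hker : (J.mkQ : R →+ J.ringCon.Quotient).ker = I := by
    ext x
    rw [← SetLike.mem_coe (p := I), ← hJI, SetLike.mem_coe, ← J.mkQ_eq_zero_iff]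
    rfl
  rw [I.card_eq_card_quotient_mul_card_addSubgroup, ← hker, Nat.card_congr
    (QuotientAddGroup.quotientKerEquivOfSurjective _ J.mkQ_surjective).toEquiv]

theorem closure_mkQ_eq_top {a b c : R} (hgen : closure {a, b, c} = ⊤) (hb : b ∈ J) :
    closure {J.mkQ a, J.mkQ (a + c)} = ⊤ := by
  refine eq_top_iff.mpr fun q _ => ?_
  obtain ⟨r, rfl⟩ := J.mkQ_surjective q
  refine (J.mkQ : R →+ J.ringCon.Quotient).map_mem_of_closure_eq_top hgen ?_ r
  have hc : J.mkQ c = J.mkQ (a + c) - J.mkQ a := by rw [map_add]; abel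
  simp only [Set.forall_mem_insert, Set.mem_singleton_iff, forall_eq, AddMonoidHom.coe_coe,
    J.mkQ_eq_zero_iff.mpr hb, hc]
  exact ⟨subset_closure (Or.inl rfl), AddSubgroup.zero_mem _,
    _root_.sub_mem (subset_closure (Or.inr rfl)) (subset_closure (Or.inl rfl))⟩

end TwoSidedIdeal

end NonUnitalRing

/-- In the ring `R₄` of order `p³` with presentation
`a² = a, ba = b, ac = c, b² = c² = ab = bc = ca = cb = 0`, the additive subgroup
generated by `b` is a two-sided ideal `J`, and the quotient ring `R/J` has order
`p²` with generators `u, v` satisfying `u² = u, v² = v, uv = v, vu = u`. -/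
theorem R4_quotient_by_b_is_R2 (p : ℕ) (hp : p.Prime)
    (R : Type*) [NonUnitalRing R] (hcard : Nat.card R = p ^ 3) (a b c : R)
    (ha : p • a = 0) (hb : p • b = 0) (hc : p • c = 0)
    (hgen : AddSubgroup.closure {a, b, c} = ⊤)
    (haa : a * a = a) (hba : b * a = b) (hac : a * c = c)
    (hbb : b * b = 0) (hcc : c * c = 0) (hab : a * b = 0)
    (hbc : b * c = 0) (hca : c * a = 0) (hcb : c * b = 0) :
    IsTwoSidedIdeal (AddSubgroup.closure {b}) ∧
    ∃ J : TwoSidedIdeal R, (J : Set R) = ((AddSubgroup.closure {b} : AddSubgroup R) : Set R) ∧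
      Nat.card J.ringCon.Quotient = p ^ 2 ∧
      ∃ u v : J.ringCon.Quotient, p • u = 0 ∧ p • v = 0 ∧
        AddSubgroup.closure {u, v} = ⊤ ∧
        u * u = u ∧ v * v = v ∧ u * v = v ∧ v * u = u := by
  have hb_left (r : R) : r * b = 0 := mem_bot.mp <|
    (AddMonoidHom.mulRight b).map_mem_of_closure_eq_top hgen (by simp [hab, hbb, hcb]) r
  have hb_right (r : R) : b * r ∈ closure {b} :=
    (AddMonoidHom.mulLeft b).map_mem_of_closure_eq_top hgen
      (by simp [hba, hbb, hbc, mem_closure_singleton_self]) r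
  have hJ : IsTwoSidedIdeal (closure {b}) :=
    isTwoSidedIdeal_closure (by simp [hb_left]) (by simpa using hb_right)
  set J := hJ.toTwoSidedIdeal
  have hJb : (J : Set R) = closure {b} := hJ.coe_toTwoSidedIdeal
  have hpu : p • J.mkQ a = 0 := by rw [← map_nsmul, ha, map_zero]
  have hpv : p • J.mkQ (a + c) = 0 := by rw [← map_nsmul, smul_add, ha, hc, add_zero, map_zero]
  have huv := J.closure_mkQ_eq_top hgen <| by
    rw [← SetLike.mem_coe, hJb]; exact mem_closure_singleton_self b
  have hcardQ := AddCommGroup.card_le_sq_of_closure_pair_eq_top hp.pos hpu hpv huv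
  have hcardJ : Nat.card (closure {b}) ≤ p := by
    rw [← zmultiples_eq_closure, Nat.card_zmultiples]
    exact addOrderOf_le_of_nsmul_eq_zero hp.pos hb
  have hlagrange := J.card_eq_card_quotient_mul_card hJb
  refine ⟨hJ, J, hJb, by nlinarith [hp.pos], J.mkQ a, J.mkQ (a + c), hpu, hpv, huv,
    ?_, ?_, ?_, ?_⟩ <;>
    rw [← map_mul] <;> congr 1 <;> simp only [mul_add, add_mul, haa, hac, hca, hcc, add_zero]
end

section
/- Let p be a prime and let R be a ring with exactly p³ elements containing elements a, b, c such that p•a = p•b = p•c = 0, the additive group of R is generated by a, b, c, and a² = a, ba = b, ac = c, b² = c² = ab = bc = ca = cb = 0. Then R is the union of p + 1 proper left ideals, and R is not the union of any p proper left ideals. -/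
theorem zsmul_eq_zero_of_intCast_eq_zero {G : Type*} [AddGroup G] {p : ℕ} {x : G}
    (hx : p • x = 0) {i : ℤ} (hi : (i : ZMod p) = 0) : i • x = 0 :=
  addOrderOf_dvd_iff_zsmul_eq_zero.mp <| (Int.natCast_dvd_natCast.mpr
    (addOrderOf_dvd_of_nsmul_eq_zero hx)).trans ((ZMod.intCast_zmod_eq_zero_iff_dvd i p).mp hi)

namespace AddSubgroup

variable {G : Type*}

theorem card_le_prime_pow_of_ne_top [AddGroup G] {p n : ℕ} (hp : p.Prime)
    (hG : Nat.card G = p ^ (n + 1)) {H : AddSubgroup G} (hH : H ≠ ⊤) :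
    Nat.card H ≤ p ^ n := by
  have : Finite G := Nat.finite_of_card_ne_zero (by simp [hG, hp.ne_zero])
  obtain ⟨m, hm, hHm⟩ := (Nat.dvd_prime_pow hp).mp (hG ▸ H.card_addSubgroup_dvd_card)
  have hmn : m ≠ n + 1 := fun h => hH (H.eq_top_of_card_eq (by rw [hHm, hG, h]))
  exact hHm ▸ Nat.pow_le_pow_right hp.pos (by omega)

theorem iUnion_ne_univ_of_card_eq_prime_pow [AddGroup G] {p n : ℕ} (hp : p.Prime)
    (hG : Nat.card G = p ^ (n + 1)) {H : Fin p → AddSubgroup G} (hH : ∀ i, H i ≠ ⊤) :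
    ⋃ i, (H i : Set G) ≠ Set.univ := by
  have : Finite G := Nat.finite_of_card_ne_zero (by simp [hG, hp.ne_zero])
  intro hcov
  have hsub : ({0}ᶜ : Set G) ⊆ ⋃ i, ((H i : Set G) \ {0}) := by
    intro x hx
    obtain ⟨i, hi⟩ := Set.mem_iUnion.mp (hcov ▸ Set.mem_univ x)
    exact Set.mem_iUnion.mpr ⟨i, hi, hx⟩
  have hcount : p ^ (n + 1) - 1 ≤ p * (p ^ n - 1) :=
    calc p ^ (n + 1) - 1 = ({0}ᶜ : Set G).ncard := by
          rw [Set.ncard_compl, Set.ncard_singleton, hG]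
      _ ≤ (⋃ i, ((H i : Set G) \ {0})).ncard := Set.ncard_le_ncard hsub
      _ ≤ ∑ i, ((H i : Set G) \ {0}).ncard := Set.ncard_iUnion_le_of_fintype _
      _ = ∑ i, (Nat.card (H i) - 1) := by
        simp only [Set.ncard_sdiff_singleton_of_mem (zero_mem _), ← Nat.card_coe_set_eq]
        rfl
      _ ≤ ∑ _i : Fin p, (p ^ n - 1) := Finset.sum_le_sum fun i _ =>
        Nat.sub_le_sub_right (card_le_prime_pow_of_ne_top hp hG (hH i)) 1
      _ = p * (p ^ n - 1) := by simp
  rw [Nat.mul_sub, mul_one, ← pow_succ'] at hcount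
  have : p ≤ p ^ (n + 1) := Nat.le_self_pow n.succ_ne_zero p
  have := hp.two_le
  omega

theorem mem_closure_triple [AddCommGroup G] {x y z w : G} :
    w ∈ closure {x, y, z} ↔ ∃ l m n : ℤ, l • x + m • y + n • z = w := by
  rw [← Set.singleton_union, closure_union, mem_sup]
  simp_rw [mem_closure_singleton, mem_closure_pair, add_assoc]
  constructor
  · rintro ⟨_, ⟨l, rfl⟩, _, ⟨m, n, rfl⟩, rfl⟩
    exact ⟨l, m, n, rfl⟩
  · rintro ⟨l, m, n, rfl⟩
    exact ⟨_, ⟨l, rfl⟩, _, ⟨m, n, rfl⟩, rfl⟩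

theorem card_closure_pair_le [AddCommGroup G] {p : ℕ} [NeZero p] {x y : G}
    (hx : p • x = 0) (hy : p • y = 0) : Nat.card (closure {x, y}) ≤ p ^ 2 := by
  have hfin : ∀ {z : G}, p • z = 0 → Finite (zmultiples z) := fun hz =>
    (isOfFinAddOrder_iff_nsmul_eq_zero.mpr ⟨p, NeZero.pos p, hz⟩).finite_zmultiples.to_subtype
  have hcard : ∀ {z : G}, p • z = 0 → Nat.card (zmultiples z) ≤ p := fun hz =>
    (Nat.card_zmultiples _).trans_le (addOrderOf_le_of_nsmul_eq_zero (NeZero.pos p) hz)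
  have := hfin hx
  have := hfin hy
  rw [← Set.singleton_union, closure_union, ← zmultiples_eq_closure, ← zmultiples_eq_closure]
  have hsurj : Function.Surjective fun q : zmultiples x × zmultiples y =>
      (⟨q.1 + q.2, add_mem (mem_sup_left q.1.2) (mem_sup_right q.2.2)⟩ :
        ↥(zmultiples x ⊔ zmultiples y)) := by
    rintro ⟨z, hz⟩
    obtain ⟨x', y', rfl⟩ := mem_sup'.mp hz
    exact ⟨(x', y'), rfl⟩
  calc _ ≤ Nat.card (zmultiples x × zmultiples y) := Nat.card_le_card_of_surjective _ hsurj
    _ ≤ p ^ 2 := by rw [Nat.card_prod, sq]; exact Nat.mul_le_mul (hcard hx) (hcard hy)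

/-- In coordinates `u, v, w` over `𝔽_p`, these are the `p + 1` planes containing `v`. -/
def planesThrough [AddCommGroup G] (p : ℕ) (u v w : G) : Fin (p + 1) → AddSubgroup G :=
  Fin.lastCases (closure {u, v}) fun t => closure {v, w - (t : ℕ) • u}

variable [AddCommGroup G] {p : ℕ} {u v w : G}

theorem mem_planesThrough (i : Fin (p + 1)) : v ∈ planesThrough p u v w i := by
  induction i using Fin.lastCases <;>
    simp only [planesThrough, Fin.lastCases_last, Fin.lastCases_castSucc] <;>
    exact subset_closure (by simp)

theorem card_planesThrough_le [NeZero p] (hu : p • u = 0) (hv : p • v = 0) (hw : p • w = 0)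
    (i : Fin (p + 1)) : Nat.card (planesThrough p u v w i) ≤ p ^ 2 := by
  induction i using Fin.lastCases with
  | last => simpa [planesThrough] using card_closure_pair_le hu hv
  | cast t =>
    simpa [planesThrough] using card_closure_pair_le hv (by rw [smul_sub, hw, smul_comm, hu]; simp)

theorem exists_mem_planesThrough (hp : p.Prime) (hu : p • u = 0) (hw : p • w = 0) {x : G}
    (hx : x ∈ closure {u, v, w}) : ∃ i, x ∈ planesThrough p u v w i := by
  have : Fact p.Prime := ⟨hp⟩
  obtain ⟨l, m, n, rfl⟩ := mem_closure_triple.mp hx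
  by_cases hn : (n : ZMod p) = 0
  · refine ⟨Fin.last p, ?_⟩
    simp only [planesThrough, Fin.lastCases_last]
    refine mem_closure_pair.mpr ⟨l, m, ?_⟩
    rw [zsmul_eq_zero_of_intCast_eq_zero hw hn, add_zero]
  · -- choose `t ≡ -l / n` so that the `u`-coordinate is absorbed by `n • (w - t • u)`
    set t : ZMod p := -l / n with ht
    refine ⟨Fin.castSucc ⟨t.val, t.val_lt⟩, ?_⟩
    simp only [planesThrough, Fin.lastCases_castSucc]
    refine mem_closure_pair.mpr ⟨m, n, ?_⟩
    have h0 : (l + n * t.val) • u = 0 := zsmul_eq_zero_of_intCast_eq_zero hu <| by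
      push_cast
      rw [ZMod.natCast_val, ZMod.cast_id', id, ht]
      field_simp
      ring
    linear_combination (norm := module) -h0

end AddSubgroup

open AddSubgroup in
theorem isLeftIdeal_of_mem {R : Type*} [NonUnitalRing R] {a b c : R}
    (hgen : closure {a, b, c} = ⊤) (haa : a * a = a) (hba : b * a = b) (hac : a * c = c)
    (hbb : b * b = 0) (hcc : c * c = 0) (hab : a * b = 0) (hbc : b * c = 0) (hca : c * a = 0)
    (hcb : c * b = 0) {H : AddSubgroup R} (hbH : b ∈ H) : IsLeftIdeal H := by
  intro r x hx
  obtain ⟨i, j, k, rfl⟩ := mem_closure_triple.mp (hgen ▸ mem_top r)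
  set r := i • a + j • b + k • c
  have hra : r * a - i • a = j • b := by simp [r, add_mul, smul_mul_assoc, haa, hba, hca]
  have hrb : r * b - i • b = (-i) • b := by simp [r, add_mul, smul_mul_assoc, hab, hbb, hcb]
  have hrc : r * c - i • c = 0 := by simp [r, add_mul, smul_mul_assoc, hac, hbc, hcc]
  have hmod : closure {a, b, c} ≤ (zmultiples b).comap (AddMonoidHom.mulLeft r - i • .id R) := by
    simp only [closure_le, Set.insert_subset_iff, Set.singleton_subset_iff, SetLike.mem_coe,
      mem_comap, AddMonoidHom.sub_apply, AddMonoidHom.coe_mulLeft, AddMonoidHom.smul_apply,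
      AddMonoidHom.id_apply, hra, hrb, hrc]
    exact ⟨zsmul_mem (mem_zmultiples b) j, zsmul_mem (mem_zmultiples b) (-i), zero_mem _⟩
  have hx' : r * x - i • x ∈ zmultiples b := hmod (hgen ▸ mem_top x)
  simpa using add_mem (zmultiples_le.mpr hbH hx') (zsmul_mem hx i)

/-- The ring `R₄` of order `p³` is the union of `p + 1` proper left ideals,
but not of any `p` proper left ideals. -/
theorem R4_left_ideal_covering_number (p : ℕ) (hp : p.Prime)
    (R : Type*) [NonUnitalRing R] (hcard : Nat.card R = p ^ 3) (a b c : R)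
    (ha : p • a = 0) (hb : p • b = 0) (hc : p • c = 0)
    (hgen : AddSubgroup.closure {a, b, c} = ⊤)
    (haa : a * a = a) (hba : b * a = b) (hac : a * c = c)
    (hbb : b * b = 0) (hcc : c * c = 0) (hab : a * b = 0)
    (hbc : b * c = 0) (hca : c * a = 0) (hcb : c * b = 0) :
    (∃ f : Fin (p + 1) → AddSubgroup R,
      (∀ i, IsLeftIdeal (f i) ∧ f i ≠ ⊤) ∧ ∀ x : R, ∃ i, x ∈ f i) ∧
    ¬ ∃ f : Fin p → AddSubgroup R,
      (∀ i, IsLeftIdeal (f i) ∧ f i ≠ ⊤) ∧ ∀ x : R, ∃ i, x ∈ f i := by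
  have : NeZero p := ⟨hp.ne_zero⟩
  have hproper (i : Fin (p + 1)) : AddSubgroup.planesThrough p a b c i ≠ ⊤ := fun htop => by
    have hle := AddSubgroup.card_planesThrough_le ha hb hc i
    rw [htop, AddSubgroup.card_top, hcard] at hle
    exact absurd hle (Nat.pow_lt_pow_right hp.one_lt (by norm_num)).not_ge
  refine ⟨⟨AddSubgroup.planesThrough p a b c, fun i => ⟨?_, hproper i⟩, fun x => ?_⟩, ?_⟩
  · exact isLeftIdeal_of_mem hgen haa hba hac hbb hcc hab hbc hca hcb
      (AddSubgroup.mem_planesThrough i)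
  · exact AddSubgroup.exists_mem_planesThrough hp ha hc (hgen ▸ AddSubgroup.mem_top x)
  · rintro ⟨f, hf, hcov⟩
    exact AddSubgroup.iUnion_ne_univ_of_card_eq_prime_pow hp hcard (fun i => (hf i).2)
      (Set.iUnion_eq_univ_iff.mpr hcov)
end

section
/- Let R be a ring. Then R is the union of 3 proper left ideals but not the union of 2 proper left ideals if and only if there exists a two-sided ideal I of R such that the quotient ring R/I has exactly 4 elements, x + x = 0 for every x ∈ R/I, and either (i) x·y = 0 for all x, y ∈ R/I, or (ii) R/I contains elements a, b additively generating R/I with a² = a, b² = b, ab = b, ba = a. -/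
namespace AddSubgroup

variable {G : Type*} [AddCommGroup G] {A B C H : AddSubgroup G} {a b c : G}

theorem exists_notMem_of_ne_top_of_ne_top (hA : A ≠ ⊤) (hB : B ≠ ⊤) : ∃ x, x ∉ A ∧ x ∉ B := by
  obtain ⟨a, haA⟩ : ∃ a, a ∉ A := by simpa [eq_top_iff'] using hA
  obtain ⟨b, hbB⟩ : ∃ b, b ∉ B := by simpa [eq_top_iff'] using hB
  by_cases haB : a ∈ B
  · by_cases hbA : b ∈ A
    · refine ⟨a + b, fun h => haA ?_, fun h => hbB ?_⟩
      · simpa using A.sub_mem h hbA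
      · simpa using B.sub_mem h haB
    · exact ⟨b, hbA, hbB⟩
  · exact ⟨a, haA, haB⟩

theorem sub_mem_of_index_eq_two (h : H.index = 2) {x y : G} (hx : x ∉ H) (hy : y ∉ H) :
    x - y ∈ H := by
  rw [sub_eq_add_neg, add_mem_iff_of_index_two h, neg_mem_iff]
  tauto

theorem add_mem_of_cover (hcov : ∀ x, x ∈ A ∨ x ∈ B ∨ x ∈ C) {x y : G}
    (hxA : x ∈ A) (hxB : x ∉ B) (hyB : y ∈ B) (hyA : y ∉ A) : x + y ∈ C := by
  refine ((hcov (x + y)).resolve_left fun h => hyA ?_).resolve_left fun h => hxB ?_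
  · simpa using A.sub_mem h hxA
  · simpa using B.sub_mem h hyB

theorem inf_le_of_cover (hcov : ∀ x, x ∈ A ∨ x ∈ B ∨ x ∈ C)
    (hcC : c ∈ C) (hcA : c ∉ A) (hcB : c ∉ B) : A ⊓ B ≤ C := by
  rintro g ⟨hgA, hgB⟩
  rcases hcov (c + g) with h | h | h
  · exact absurd (by simpa using A.sub_mem h hgA) hcA
  · exact absurd (by simpa using B.sub_mem h hgB) hcB
  · simpa using C.sub_mem h hcC

theorem index_eq_two_of_cover (hcov : ∀ x, x ∈ A ∨ x ∈ B ∨ x ∈ C)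
    (haA : a ∈ A) (haB : a ∉ B) (hbB : b ∈ B) (hbA : b ∉ A) (hbC : b ∉ C) : A.index = 2 := by
  refine index_eq_two_iff_exists_notMem_and.2
    ⟨b, hbA, fun g => or_iff_not_imp_right.2 fun hgA => ?_⟩
  by_cases hgB : g ∈ B
  · by_contra hgbA
    have h₁ := add_mem_of_cover hcov haA haB hgB hgA
    have h₂ := add_mem_of_cover hcov haA haB (B.add_mem hgB hbB) hgbA
    exact hbC (by simpa [← add_assoc] using C.sub_mem h₂ h₁)
  · have hgC : g ∈ C := by have := hcov g; tauto
    exact add_mem_of_cover (fun x => by have := hcov x; tauto) hgC hgB hbB hbC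

theorem eq_top_of_inf_le (hA : A.index = 2) (hB : B.index = 2) (haA : a ∈ A) (haB : a ∉ B)
    (hbA : b ∉ A) (hH : A ⊓ B ≤ H) (haH : a ∈ H) (hbH : b ∈ H) : H = ⊤ := by
  have hAH : A ≤ H := fun x hxA => by
    by_cases hxB : x ∈ B
    · exact hH ⟨hxA, hxB⟩
    · simpa using H.add_mem (hH ⟨A.sub_mem hxA haA, sub_mem_of_index_eq_two hB hxB haB⟩) haH
  refine (eq_top_iff' H).2 fun x => ?_
  by_cases hxA : x ∈ A
  · exact hAH hxA
  · simpa using H.add_mem (hAH (sub_mem_of_index_eq_two hA hxA hbA)) hbH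

theorem index_inf_eq_four (hA : A.index = 2) (hB : B.index = 2) (hAB : ¬ A ≤ B) :
    (A ⊓ B).index = 4 := by
  have hdvd : B.relIndex A ∣ 2 := hB ▸ relIndex_dvd_index_of_normal B A
  have hne : B.relIndex A ≠ 1 := by rwa [Ne, relIndex_eq_one]
  have hrel : B.relIndex A = 2 := ((Nat.dvd_prime Nat.prime_two).1 hdvd).resolve_left hne
  rw [← relIndex_mul_index inf_le_left, inf_relIndex_left, hrel, hA]

end AddSubgroup

section LeftIdeals

variable {R : Type*} [NonUnitalRing R]

def HasLeftIdealCover (R : Type*) [NonUnitalRing R] (n : ℕ) : Prop :=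
  ∃ f : Fin n → AddSubgroup R, (∀ i, IsLeftIdeal (f i) ∧ f i ≠ ⊤) ∧ ∀ x : R, ∃ i, x ∈ f i

theorem not_hasLeftIdealCover_two : ¬ HasLeftIdealCover R 2 := by
  rintro ⟨f, hf, hcov⟩
  obtain ⟨x, hx₀, hx₁⟩ := AddSubgroup.exists_notMem_of_ne_top_of_ne_top (hf 0).2 (hf 1).2
  obtain ⟨i, hi⟩ := hcov x
  fin_cases i <;> contradiction

theorem exists_notMem_of_not_hasLeftIdealCover_two (h : ¬ HasLeftIdealCover R 2)
    {B C : AddSubgroup R} (hB : IsLeftIdeal B ∧ B ≠ ⊤) (hC : IsLeftIdeal C ∧ C ≠ ⊤) :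
    ∃ x, x ∉ B ∧ x ∉ C := by
  by_contra! hBC
  refine h ⟨![B, C], fun i => ?_, fun x => ?_⟩
  · fin_cases i
    exacts [hB, hC]
  · by_cases hx : x ∈ B
    exacts [⟨0, hx⟩, ⟨1, hBC x hx⟩]

theorem HasLeftIdealCover.of_surjective {Q : Type*} [NonUnitalRing Q] {n : ℕ}
    (h : HasLeftIdealCover Q n) (f : R →ₙ+* Q) (hf : Function.Surjective f) :
    HasLeftIdealCover R n := by
  obtain ⟨g, hg, hcov⟩ := h
  refine ⟨fun i => (g i).comap (f : R →+ Q), fun i => ⟨fun r x hx => ?_, fun htop => ?_⟩,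
    fun x => hcov (f x)⟩
  · simpa [map_mul] using (hg i).1 (f r) hx
  · refine (hg i).2 ((AddSubgroup.eq_top_iff' _).2 fun q => ?_)
    obtain ⟨x, rfl⟩ := hf q
    exact (AddSubgroup.eq_top_iff' _).1 htop x

theorem IsLeftIdeal.inf {A B : AddSubgroup R} (hA : IsLeftIdeal A) (hB : IsLeftIdeal B) :
    IsLeftIdeal (A ⊓ B) :=
  fun r _ hx => ⟨hA r hx.1, hB r hx.2⟩

end LeftIdeals

section Dichotomy

variable {R : Type*} [NonUnitalRing R] {N S : AddSubgroup R}

def LeftMulZeroOrIdModulo (N : AddSubgroup R) : Prop :=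
  ∀ r : R, (∀ x, r * x ∈ N) ∨ ∀ x, r * x - x ∈ N

/-- The annihilator `{r | r * R ⊆ N}` of the left `R`-module `R ⧸ N`. -/
def AddSubgroup.quotientAnnihilator (N : AddSubgroup R) : AddSubgroup R :=
  ⨅ x : R, N.comap (AddMonoidHom.mulRight x)

theorem AddSubgroup.mem_quotientAnnihilator {r : R} :
    r ∈ N.quotientAnnihilator ↔ ∀ x, r * x ∈ N := by
  simp [quotientAnnihilator, AddSubgroup.mem_iInf]

open AddSubgroup

theorem leftMulZeroOrIdModulo_inf_of_cover {A B C : AddSubgroup R} (hA : IsLeftIdeal A)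
    (hB : IsLeftIdeal B) (hC : IsLeftIdeal C) (hcov : ∀ x, x ∈ A ∨ x ∈ B ∨ x ∈ C) {a b : R}
    (haA : a ∈ A) (haB : a ∉ B) (haC : a ∉ C) (hbB : b ∈ B) (hbA : b ∉ A) (hbC : b ∉ C) :
    LeftMulZeroOrIdModulo (A ⊓ B) := by
  have hA₂ : A.index = 2 := index_eq_two_of_cover hcov haA haB hbB hbA hbC
  have hB₂ : B.index = 2 :=
    index_eq_two_of_cover (fun x => by have := hcov x; tauto) hbB hbA haA haB haC
  have habC : a + b ∈ C := add_mem_of_cover hcov haA haB hbB hbA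
  have hABC : A ⊓ B ≤ C := inf_le_of_cover hcov habC
    (fun h => hbA (by simpa using A.sub_mem h haA)) (fun h => haB (by simpa using B.sub_mem h hbB))
  have hgen (f : R →+ R) (hf : ∀ n ∈ A ⊓ B, f n ∈ A ⊓ B) (ha : f a ∈ A ⊓ B)
      (hb : f b ∈ A ⊓ B) (x : R) : f x ∈ A ⊓ B :=
    (eq_top_iff' _).1 (eq_top_of_inf_le (H := (A ⊓ B).comap f) hA₂ hB₂ haA haB hbA hf ha hb) x
  intro r
  have hra : r * a ∈ A := hA r haA
  have hrb : r * b ∈ B := hB r hbB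
  have hrab : r * a + r * b ∈ C := mul_add r a b ▸ hC r habC
  by_cases hraB : r * a ∈ B
  · have hrbA : r * b ∈ A := by
      by_contra hrbA
      have h := C.sub_mem (C.sub_mem hrab (hABC ⟨hra, hraB⟩))
        (hABC ⟨sub_mem_of_index_eq_two hA₂ hrbA hbA, B.sub_mem hrb hbB⟩)
      exact hbC (by simpa using h)
    exact .inl <| hgen (AddMonoidHom.mulLeft r) (fun n hn => (hA.inf hB) r hn)
      ⟨hra, hraB⟩ ⟨hrbA, hrb⟩
  · have hra' : r * a - a ∈ A ⊓ B := ⟨A.sub_mem hra haA, sub_mem_of_index_eq_two hB₂ hraB haB⟩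
    have hrbA : r * b - b ∈ A := by
      by_contra hrbA
      have hrbA' : r * b ∈ A := by
        by_contra h
        exact hrbA (sub_mem_of_index_eq_two hA₂ h hbA)
      have h := C.sub_mem (C.sub_mem hrab (hABC hra')) (hABC ⟨hrbA', hrb⟩)
      exact haC (by simpa using h)
    exact .inr <| hgen (AddMonoidHom.mulLeft r - AddMonoidHom.id R)
      (fun n hn => (A ⊓ B).sub_mem ((hA.inf hB) r hn) hn) hra' ⟨hrbA, B.sub_mem hrb hbB⟩

theorem isTwoSidedIdeal_inf_quotientAnnihilator (hN : IsLeftIdeal N) (hS : IsLeftIdeal S)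
    (hNS : N ≤ S) : IsTwoSidedIdeal (S ⊓ N.quotientAnnihilator) := by
  refine ⟨hS.inf fun r x hx => mem_quotientAnnihilator.2 fun y => ?_, fun r x hx => ⟨?_, ?_⟩⟩
  · simpa [mul_assoc] using hN r (mem_quotientAnnihilator.1 hx y)
  · exact hNS (mem_quotientAnnihilator.1 hx.2 r)
  · exact mem_quotientAnnihilator.2 fun y => by
      simpa [mul_assoc] using mem_quotientAnnihilator.1 hx.2 (r * y)

theorem LeftMulZeroOrIdModulo.inf_quotientAnnihilator (hd : LeftMulZeroOrIdModulo N)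
    (hNS : N ≤ S) : LeftMulZeroOrIdModulo (S ⊓ N.quotientAnnihilator) := by
  intro r
  by_cases hr : r ∈ N.quotientAnnihilator
  · refine .inl fun x => ⟨hNS (mem_quotientAnnihilator.1 hr x), mem_quotientAnnihilator.2 ?_⟩
    simpa [mul_assoc] using fun y => mem_quotientAnnihilator.1 hr (x * y)
  · have hr' := (hd r).resolve_left (mt mem_quotientAnnihilator.2 hr)
    refine .inr fun x => ⟨hNS (hr' x), mem_quotientAnnihilator.2 fun y => ?_⟩
    simpa [sub_mul, mul_assoc] using hr' (x * y)

theorem add_self_mem_inf_quotientAnnihilator (h₂ : ∀ x, x + x ∈ N) (hNS : N ≤ S) (x : R) :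
    x + x ∈ S ⊓ N.quotientAnnihilator :=
  ⟨hNS (h₂ x), mem_quotientAnnihilator.2 fun y => by simpa [add_mul] using h₂ (x * y)⟩

theorem LeftMulZeroOrIdModulo.index_quotientAnnihilator (hd : LeftMulZeroOrIdModulo N)
    (h₂ : ∀ x, x + x ∈ N) (hK : N.quotientAnnihilator ≠ ⊤) : N.quotientAnnihilator.index = 2 := by
  obtain ⟨e, he⟩ : ∃ e, e ∉ N.quotientAnnihilator := by simpa [eq_top_iff'] using hK
  have hfix {r} (hr : r ∉ N.quotientAnnihilator) : ∀ x, r * x - x ∈ N :=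
    (hd r).resolve_left (mt mem_quotientAnnihilator.2 hr)
  refine index_eq_two_iff_exists_notMem_and.2 ⟨e, he, fun r => or_iff_not_imp_right.2 fun hr => ?_⟩
  refine mem_quotientAnnihilator.2 fun x => ?_
  have h := N.add_mem (N.add_mem (hfix hr x) (hfix he x)) (h₂ x)
  rwa [show r * x - x + (e * x - x) + (x + x) = (r + e) * x by rw [add_mul]; abel] at h

end Dichotomy

def LeftMulZeroOrId (Q : Type*) [Mul Q] [Zero Q] : Prop :=
  ∀ q : Q, (∀ x, q * x = 0) ∨ ∀ x, q * x = x

namespace IsTwoSidedIdeal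

variable {R : Type*} [NonUnitalRing R] {J : AddSubgroup R} (hJ : IsTwoSidedIdeal J)

def toTwoSidedIdeal_s16 : TwoSidedIdeal R :=
  .mk' J J.zero_mem J.add_mem J.neg_mem (fun {x _} hy => hJ.1 x hy) (fun {_ y} hx => hJ.2 y hx)

theorem coe_eq_coe_iff {x y : R} :
    (x : hJ.toTwoSidedIdeal_s16.ringCon.Quotient) = y ↔ x - y ∈ J := by
  rw [RingCon.eq, TwoSidedIdeal.rel_iff, toTwoSidedIdeal_s16, TwoSidedIdeal.mem_mk']
  rfl

theorem card_quotient : Nat.card hJ.toTwoSidedIdeal_s16.ringCon.Quotient = J.index :=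
  Nat.card_congr <| Quotient.congr (Equiv.refl R) fun x y => by
    rw [QuotientAddGroup.leftRel_apply, ← J.neg_mem_iff, neg_add_eq_sub, neg_sub]
    exact (RingCon.eq _).symm.trans hJ.coe_eq_coe_iff

theorem add_self_eq_zero (h₂ : ∀ x, x + x ∈ J) (q : hJ.toTwoSidedIdeal_s16.ringCon.Quotient) :
    q + q = 0 := by
  obtain ⟨x, rfl⟩ := Quot.exists_rep q
  exact (hJ.coe_eq_coe_iff (x := x + x) (y := 0)).2 (by simpa using h₂ x)

theorem leftMulZeroOrId_quotient (hd : LeftMulZeroOrIdModulo J) :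
    LeftMulZeroOrId hJ.toTwoSidedIdeal_s16.ringCon.Quotient := by
  intro q
  obtain ⟨r, rfl⟩ := Quot.exists_rep q
  refine (hd r).imp (fun h x => ?_) (fun h x => ?_) <;> obtain ⟨x, rfl⟩ := Quot.exists_rep x
  · exact (hJ.coe_eq_coe_iff (x := r * x) (y := 0)).2 (by simpa using h x)
  · exact (hJ.coe_eq_coe_iff (x := r * x) (y := x)).2 (h x)

end IsTwoSidedIdeal

section Cover

variable {R : Type*} [NonUnitalRing R]

open AddSubgroup

theorem exists_quotient_leftMulZeroOrId_of_cover {A B C : AddSubgroup R} (hA : IsLeftIdeal A)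
    (hB : IsLeftIdeal B) (hC : IsLeftIdeal C) (hcov : ∀ x, x ∈ A ∨ x ∈ B ∨ x ∈ C) {a b : R}
    (haA : a ∈ A) (haB : a ∉ B) (haC : a ∉ C) (hbB : b ∈ B) (hbA : b ∉ A) (hbC : b ∉ C) :
    ∃ I : TwoSidedIdeal R, Nat.card I.ringCon.Quotient = 4 ∧
      (∀ x : I.ringCon.Quotient, x + x = 0) ∧ LeftMulZeroOrId I.ringCon.Quotient := by
  have hA₂ : A.index = 2 := index_eq_two_of_cover hcov haA haB hbB hbA hbC
  have hB₂ : B.index = 2 :=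
    index_eq_two_of_cover (fun x => by have := hcov x; tauto) hbB hbA haA haB haC
  have hd := leftMulZeroOrIdModulo_inf_of_cover hA hB hC hcov haA haB haC hbB hbA hbC
  have h₂ (x : R) : x + x ∈ A ⊓ B :=
    ⟨add_self_mem_of_index_two hA₂ x, add_self_mem_of_index_two hB₂ x⟩
  set K := (A ⊓ B).quotientAnnihilator
  -- `R ⧸ (S ⊓ K)` has order four for `S = A ⊓ B` when `K = R`, and for `S ∈ {A, B}` otherwise.
  obtain ⟨S, hS, hNS, hS₄⟩ : ∃ S, IsLeftIdeal S ∧ A ⊓ B ≤ S ∧ (S ⊓ K).index = 4 := by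
    by_cases hK : K = ⊤
    · refine ⟨A ⊓ B, hA.inf hB, le_rfl, ?_⟩
      rw [hK, inf_top_eq]
      exact index_inf_eq_four hA₂ hB₂ fun h => haB (h haA)
    have hK₂ := hd.index_quotientAnnihilator h₂ hK
    by_cases hAK : A ≤ K
    · have hBK : ¬ B ≤ K := fun hBK =>
        hK (eq_top_of_inf_le hA₂ hB₂ haA haB hbA (inf_le_left.trans hAK) (hAK haA) (hBK hbB))
      exact ⟨B, hB, inf_le_right, index_inf_eq_four hB₂ hK₂ hBK⟩
    · exact ⟨A, hA, inf_le_left, index_inf_eq_four hA₂ hK₂ hAK⟩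
  have hJ := isTwoSidedIdeal_inf_quotientAnnihilator (hA.inf hB) hS hNS
  exact ⟨hJ.toTwoSidedIdeal_s16, hJ.card_quotient ▸ hS₄,
    hJ.add_self_eq_zero (add_self_mem_inf_quotientAnnihilator h₂ hNS),
    hJ.leftMulZeroOrId_quotient (hd.inf_quotientAnnihilator hNS)⟩

end Cover

section KleinFour

variable {G : Type*} [AddGroup G]

open AddSubgroup IsAddKleinFour

theorem IsAddKleinFour.of_card_eq_four (hcard : Nat.card G = 4) (h₂ : ∀ x : G, x + x = 0) :
    IsAddKleinFour G := by
  have : Finite G := Nat.finite_of_card_ne_zero (by omega)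
  have : Nontrivial G := Finite.one_lt_card_iff_nontrivial.1 (by omega)
  refine ⟨hcard, (AddMonoid.exponent_eq_prime_iff Nat.prime_two).2 fun g hg => ?_⟩
  have : Fact (Nat.Prime 2) := ⟨Nat.prime_two⟩
  exact addOrderOf_eq_prime (by rw [two_nsmul]; exact h₂ g) hg

variable [IsAddKleinFour G]

theorem IsAddKleinFour.exists_ne_ne (x y : G) : ∃ z, z ≠ x ∧ z ≠ y := by
  have : Finite G := instFinite
  exact ENat.exists_ne_ne_of_three_le (by norm_num [ENat.card_eq_coe_natCard]) x y

theorem IsAddKleinFour.closure_pair_eq_top {a b : G} (ha : a ≠ 0) (hb : b ≠ 0) (hab : a ≠ b) :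
    closure {a, b} = ⊤ := by
  refine (eq_top_iff' _).2 fun z => ?_
  by_cases hz : z = 0
  · exact hz ▸ zero_mem _
  by_cases hza : z = a
  · exact hza ▸ subset_closure (by simp)
  by_cases hzb : z = b
  · exact hzb ▸ subset_closure (by simp)
  rw [eq_add_of_ne_all ha hb hab hz hza hzb]
  exact add_mem (subset_closure (by simp)) (subset_closure (by simp))

theorem IsAddKleinFour.zmultiples_ne_top (x : G) : zmultiples x ≠ ⊤ := fun h =>
  not_isAddCyclic (isAddCyclic_iff_exists_zmultiples_eq_top.2 ⟨x, h⟩)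

end KleinFour

section LeftMulZeroOrId

variable {Q : Type*} [NonUnitalRing Q]

open AddSubgroup IsAddKleinFour

theorem LeftMulZeroOrId.isLeftIdeal (h : LeftMulZeroOrId Q) (H : AddSubgroup Q) :
    IsLeftIdeal H :=
  fun q x hx => (h q).elim (fun h₀ => h₀ x ▸ H.zero_mem) (fun h₁ => (h₁ x).symm ▸ hx)

variable [IsAddKleinFour Q]

theorem LeftMulZeroOrId.hasLeftIdealCover_three (h : LeftMulZeroOrId Q) :
    HasLeftIdealCover Q 3 := by
  obtain ⟨u, hu, -⟩ := exists_ne_ne (0 : Q) 0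
  obtain ⟨v, hv, hvu⟩ := exists_ne_ne (0 : Q) u
  refine ⟨![zmultiples u, zmultiples v, zmultiples (u + v)],
    fun i => ⟨h.isLeftIdeal _, by fin_cases i <;> exact zmultiples_ne_top _⟩, fun x => ?_⟩
  by_cases hx : x = 0
  · exact ⟨0, hx ▸ zero_mem _⟩
  by_cases hxu : x = u
  · exact ⟨0, hxu ▸ mem_zmultiples u⟩
  by_cases hxv : x = v
  · exact ⟨1, hxv ▸ mem_zmultiples v⟩
  exact ⟨2, eq_add_of_ne_all hu hv hvu.symm hx hxu hxv ▸ mem_zmultiples (u + v)⟩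

theorem LeftMulZeroOrId.exists_idempotents (h : LeftMulZeroOrId Q)
    (h₀ : ¬ ∀ x y : Q, x * y = 0) : ∃ a b : Q, closure {a, b} = ⊤ ∧
      a * a = a ∧ b * b = b ∧ a * b = b ∧ b * a = a := by
  simp only [not_forall] at h₀
  obtain ⟨a, ha⟩ : ∃ a : Q, ∀ x, a * x = x := by
    obtain ⟨a, x, hax⟩ := h₀
    exact ⟨a, (h a).resolve_left fun h' => hax (h' x)⟩
  have ha₀ : a ≠ 0 := by
    rintro rfl
    obtain ⟨x, hx, -⟩ := exists_ne_ne (0 : Q) 0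
    exact hx (by simpa using (ha x).symm)
  obtain ⟨u, hu₀, hua⟩ := exists_ne_ne (0 : Q) a
  -- If `u` annihilates `Q`, then `u + a` acts as the identity.
  obtain ⟨b, hb₀, hba, hb⟩ : ∃ b : Q, b ≠ 0 ∧ b ≠ a ∧ ∀ x, b * x = x := by
    rcases h u with hu | hu
    · refine ⟨u + a, fun h => hua ?_, by simpa using hu₀,
        fun x => by rw [add_mul, hu, ha, zero_add]⟩
      rw [eq_neg_of_add_eq_zero_left h, IsAddKleinFour.neg_eq_self]
    · exact ⟨u, hu₀, hua, hu⟩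
  exact ⟨a, b, closure_pair_eq_top ha₀ hb₀ hba.symm, ha a, hb b, ha b, hb a⟩

theorem leftMulZeroOrId_of_idempotents {a b : Q} (hab : closure {a, b} = ⊤) (haa : a * a = a)
    (hbb : b * b = b) (hab' : a * b = b) (hba : b * a = a) : LeftMulZeroOrId Q := by
  have hid {c : Q} (hca : c * a = a) (hcb : c * b = b) (x : Q) : c * x = x :=
    DFunLike.congr_fun (AddMonoidHom.eq_of_eqOn_dense hab (f := AddMonoidHom.mulLeft c)
      (g := AddMonoidHom.id Q) (by rintro _ (rfl | rfl) <;> simpa)) x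
  intro q
  induction (eq_top_iff' _).1 hab q using closure_induction with
  | mem x hx =>
    rcases hx with rfl | rfl
    exacts [.inr (hid haa hab'), .inr (hid hba hbb)]
  | zero => exact .inl fun x => zero_mul x
  | add x y _ _ hx hy =>
    rcases hx with hx | hx <;> rcases hy with hy | hy
    · exact .inl fun z => by rw [add_mul, hx, hy, add_zero]
    · exact .inr fun z => by rw [add_mul, hx, hy, zero_add]
    · exact .inr fun z => by rw [add_mul, hx, hy, add_zero]
    · exact .inl fun z => by rw [add_mul, hx, hy, add_self]
  | neg x _ hx =>
    rcases hx with hx | hx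
    · exact .inl fun z => by rw [neg_mul, hx, neg_zero]
    · exact .inr fun z => by rw [neg_mul, hx, IsAddKleinFour.neg_eq_self]

theorem leftMulZeroOrId_iff : LeftMulZeroOrId Q ↔ (∀ x y : Q, x * y = 0) ∨
    ∃ a b : Q, closure {a, b} = ⊤ ∧ a * a = a ∧ b * b = b ∧ a * b = b ∧ b * a = a := by
  refine ⟨fun h => or_iff_not_imp_left.2 h.exists_idempotents, ?_⟩
  rintro (h₀ | ⟨a, b, hab, haa, hbb, hab', hba⟩)
  · exact fun q => .inl (h₀ q)
  · exact leftMulZeroOrId_of_idempotents hab haa hbb hab' hba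

end LeftMulZeroOrId

/-- A ring has left ideal covering number exactly 3 if and only if it has a factor
ring of order 4 with elementary abelian additive group which either has zero
multiplication, or is generated by elements `a, b` with
`a² = a, b² = b, ab = b, ba = a`. -/
theorem left_ideal_covering_number_eq_three (R : Type*) [NonUnitalRing R] :
    ((∃ f : Fin 3 → AddSubgroup R,
        (∀ i, IsLeftIdeal (f i) ∧ f i ≠ ⊤) ∧ ∀ x : R, ∃ i, x ∈ f i) ∧
      ¬ ∃ f : Fin 2 → AddSubgroup R,
        (∀ i, IsLeftIdeal (f i) ∧ f i ≠ ⊤) ∧ ∀ x : R, ∃ i, x ∈ f i) ↔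
    ∃ I : TwoSidedIdeal R,
      Nat.card I.ringCon.Quotient = 4 ∧
      (∀ x : I.ringCon.Quotient, x + x = 0) ∧
      ((∀ x y : I.ringCon.Quotient, x * y = 0) ∨
        ∃ a b : I.ringCon.Quotient, AddSubgroup.closure {a, b} = ⊤ ∧
          a * a = a ∧ b * b = b ∧ a * b = b ∧ b * a = a) := by
  change HasLeftIdealCover R 3 ∧ ¬ HasLeftIdealCover R 2 ↔ _
  constructor
  · rintro ⟨⟨f, hf, hcov⟩, h₂⟩
    have hcov' (x : R) : x ∈ f 0 ∨ x ∈ f 1 ∨ x ∈ f 2 := by simpa [Fin.exists_fin_succ] using hcov x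
    obtain ⟨a, ha₁, ha₂⟩ := exists_notMem_of_not_hasLeftIdealCover_two h₂ (hf 1) (hf 2)
    obtain ⟨b, hb₀, hb₂⟩ := exists_notMem_of_not_hasLeftIdealCover_two h₂ (hf 0) (hf 2)
    have ha₀ : a ∈ f 0 := by have := hcov' a; tauto
    have hb₁ : b ∈ f 1 := by have := hcov' b; tauto
    obtain ⟨I, hcard, hchar, hI⟩ := exists_quotient_leftMulZeroOrId_of_cover (hf 0).1 (hf 1).1
      (hf 2).1 hcov' ha₀ ha₁ ha₂ hb₁ hb₀ hb₂
    have := IsAddKleinFour.of_card_eq_four hcard hchar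
    exact ⟨I, hcard, hchar, leftMulZeroOrId_iff.1 hI⟩
  · rintro ⟨I, hcard, hchar, hmul⟩
    have := IsAddKleinFour.of_card_eq_four hcard hchar
    let π : R →ₙ+* I.ringCon.Quotient :=
      { toFun := (↑), map_zero' := rfl, map_add' := fun _ _ => rfl, map_mul' := fun _ _ => rfl }
    exact ⟨(leftMulZeroOrId_iff.2 hmul).hasLeftIdealCover_three.of_surjective π
      Quot.exists_rep, not_hasLeftIdealCover_two⟩
end

section
/- Let p be a prime and let A be a finite abelian p-group that is not cyclic. Then A is the union of p + 1 proper subgroups, and A is not the union of any p proper subgroups. -/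
/-!
Two distinct maximal subgroups `M ≠ N` of `A` have index `p`, so they are the kernels of
characters `χ, ψ : A → ZMod p`. The kernels of `χ` and of `ψ - t χ` for `t ∈ ZMod p` are
`p + 1` proper subgroups covering `A`: `x` lies in the kernel of `ψ - (ψ x / χ x) χ` when
`χ x ≠ 0`. Conversely, a proper subgroup has index at least `p`, and by B. H. Neumann's lemma
`n ≥ 2` subgroups of index at least `n` cover a group only if their cosets are disjoint, which
subgroups never are.
-/

open Subgroup
open scoped Pointwise

theorem Subgroup.iUnion_ne_univ_of_card_le_index {G ι : Type*} [Group G] [Fintype ι]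
    {H : ι → Subgroup G} (hι : 1 < Fintype.card ι) (hH : ∀ i, Fintype.card ι ≤ (H i).index) :
    ⋃ i, (H i : Set G) ≠ Set.univ := by
  classical
  intro hcov
  have hcovers : ⋃ i ∈ Finset.univ, (1 : G) • (H i : Set G) = Set.univ := by simpa using hcov
  have hsum : ∑ i, ((H i).index : ℚ)⁻¹ = 1 := by
    refine le_antisymm ?_ (one_le_sum_inv_index_of_leftCoset_cover hcovers)
    calc ∑ i, ((H i).index : ℚ)⁻¹ ≤ ∑ _i : ι, ((Fintype.card ι : ℕ) : ℚ)⁻¹ :=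
          Finset.sum_le_sum fun i _ => inv_anti₀ (by positivity) (by exact_mod_cast hH i)
      _ = 1 := by
          rw [Finset.sum_const, Finset.card_univ, nsmul_eq_mul, mul_inv_cancel₀ (by positivity)]
  have hfin : ∀ i, (H i).FiniteIndex := fun i => ⟨by have := hH i; omega⟩
  obtain ⟨i, j, hij⟩ := Fintype.exists_pair_of_one_lt_card hι
  have hdisj := pairwiseDisjoint_leftCoset_cover_of_sum_inv_index_eq_one hcovers hsum
    (by simp [hfin i]) (by simp [hfin j]) hij
  exact Set.disjoint_left.mp hdisj (show (1 : G) ∈ _ by simp) (by simp)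

theorem Subgroup.prime_le_index_of_ne_top {G : Type*} [Group G] {p k : ℕ} (hp : p.Prime)
    (hcard : Nat.card G = p ^ k) {H : Subgroup G} (hH : H ≠ ⊤) : p ≤ H.index := by
  obtain ⟨j, -, hj⟩ := (Nat.dvd_prime_pow hp).mp (hcard ▸ H.index_dvd_card)
  have hj0 : j ≠ 0 := by
    rintro rfl
    exact hH (index_eq_one.mp (by simpa using hj))
  exact hj ▸ Nat.le_self_pow hj0 p

theorem Subgroup.exists_isCoatom_ne_of_not_isCyclic {G : Type*} [Group G]
    [IsCoatomic (Subgroup G)] (hG : ¬ IsCyclic G) :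
    ∃ M N : Subgroup G, IsCoatom M ∧ IsCoatom N ∧ M ≠ N := by
  have hzpowers : ∀ x : G, zpowers x ≠ ⊤ := fun x hx =>
    hG ⟨x, fun y => (eq_top_iff' _).mp hx y⟩
  obtain ⟨M, hM, -⟩ := (eq_top_or_exists_le_coatom (zpowers (1 : G))).resolve_left (hzpowers 1)
  by_contra! h
  refine hM.1 ((eq_top_iff' M).mpr fun x => ?_)
  obtain ⟨N, hN, hxN⟩ := (eq_top_or_exists_le_coatom (zpowers x)).resolve_left (hzpowers x)
  exact h N M hN hM ▸ hxN (mem_zpowers x)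

theorem IsCoatom.isSimpleGroup_quotient {G : Type*} [Group G] {M : Subgroup G} [M.Normal]
    (hM : IsCoatom M) : IsSimpleGroup (G ⧸ M) := by
  have := QuotientGroup.nontrivial_iff.mpr hM.1
  refine ⟨fun K _ => ?_⟩
  have hinj := comap_injective (QuotientGroup.mk'_surjective M)
  rcases hM.le_iff.mp (QuotientGroup.le_comap_mk' M K) with hK | hK
  · exact .inr (hinj (by rw [hK, comap_top]))
  · refine .inl (hinj ?_)
    rw [hK, MonoidHom.comap_bot, QuotientGroup.ker_mk']

theorem IsCoatom.card_quotient_eq {G : Type*} [CommGroup G] {p k : ℕ} (hp : p.Prime)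
    (hcard : Nat.card G = p ^ k) {M : Subgroup G} (hM : IsCoatom M) : Nat.card (G ⧸ M) = p := by
  have hq : (Nat.card (G ⧸ M)).Prime :=
    CommGroup.is_simple_iff_prime_card.mp hM.isSimpleGroup_quotient
  exact (Nat.prime_dvd_prime_iff_eq hq hp).mp (hq.dvd_of_dvd_pow (hcard ▸ M.card_quotient_dvd_card))

theorem IsCoatom.exists_monoidHom_zmod_ker_eq {G : Type*} [CommGroup G] {p k : ℕ}
    [hp : Fact p.Prime] (hcard : Nat.card G = p ^ k) {M : Subgroup G} (hM : IsCoatom M) :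
    ∃ χ : G →* Multiplicative (ZMod p), χ.ker = M :=
  ⟨(mulEquivOfPrimeCardEq (G' := Multiplicative (ZMod p)) (hM.card_quotient_eq hp.out hcard)
    (Nat.card_zmod p) : G ⧸ M →* _).comp (QuotientGroup.mk' M),
    by rw [MonoidHom.ker_mulEquiv_comp, QuotientGroup.ker_mk']⟩

section Pencil

variable {G K : Type*} [Group G] [DivisionRing K] (χ ψ : G →* Multiplicative K)

/-- The kernels of the functionals of the pencil spanned by `χ` and `ψ`, indexed by the
projective line `Option K`: `some t` stands for `ψ - t χ` and `none` for `χ`. -/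
def kerPencil : Option K → Subgroup G
  | none => χ.ker
  | some t => MonoidHom.eqLocus ψ ((AddMonoidHom.mulLeft t).toMultiplicative.comp χ)

theorem exists_mem_kerPencil (x : G) : ∃ i, x ∈ kerPencil χ ψ i := by
  by_cases hx : (χ x).toAdd = 0
  · exact ⟨none, hx⟩
  · refine ⟨some ((ψ x).toAdd * (χ x).toAdd⁻¹), ?_⟩
    change ψ x = Multiplicative.ofAdd ((ψ x).toAdd * (χ x).toAdd⁻¹ * (χ x).toAdd)
    rw [inv_mul_cancel_right₀ hx, ofAdd_toAdd]

variable {χ ψ}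

theorem kerPencil_ne_top (h₁ : ¬ χ.ker ≤ ψ.ker) (h₂ : ¬ ψ.ker ≤ χ.ker) :
    ∀ i, kerPencil χ ψ i ≠ ⊤
  | none, htop => h₂ fun x _ => (eq_top_iff' _).mp htop x
  | some t, htop => h₁ fun x hx => by
      have hx' : ψ x = Multiplicative.ofAdd (t * (χ x).toAdd) := (eq_top_iff' _).mp htop x
      rw [MonoidHom.mem_ker] at hx ⊢
      rw [hx', hx, toAdd_one, mul_zero, ofAdd_zero]

end Pencil

/-- A finite non-cyclic abelian `p`-group is the union of `p + 1` proper subgroups,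
but not the union of any `p` proper subgroups. -/
theorem covering_number_of_noncyclic_abelian_p_group (p : ℕ) (hp : p.Prime)
    (A : Type*) [CommGroup A] [Finite A] (hcard : ∃ k : ℕ, Nat.card A = p ^ k)
    (hnc : ¬ IsCyclic A) :
    (∃ f : Fin (p + 1) → Subgroup A, (∀ i, f i ≠ ⊤) ∧ ∀ x : A, ∃ i, x ∈ f i) ∧
    ¬ ∃ f : Fin p → Subgroup A, (∀ i, f i ≠ ⊤) ∧ ∀ x : A, ∃ i, x ∈ f i := by
  obtain ⟨k, hk⟩ := hcard
  have := Fact.mk hp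
  refine ⟨?_, fun ⟨f, hf, hcov⟩ => ?_⟩
  · have : IsCoatomic (Subgroup A) := Finite.to_isCoatomic
    obtain ⟨M, N, hM, hN, hMN⟩ := exists_isCoatom_ne_of_not_isCyclic hnc
    obtain ⟨χ, rfl⟩ := hM.exists_monoidHom_zmod_ker_eq hk
    obtain ⟨ψ, rfl⟩ := hN.exists_monoidHom_zmod_ker_eq hk
    have h₁ : ¬ χ.ker ≤ ψ.ker := fun h => hMN ((hM.le_iff.mp h).resolve_left hN.1).symm
    have h₂ : ¬ ψ.ker ≤ χ.ker := fun h => hMN ((hN.le_iff.mp h).resolve_left hM.1)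
    let e : Fin (p + 1) ≃ Option (ZMod p) := Fintype.equivOfCardEq (by simp)
    refine ⟨kerPencil χ ψ ∘ e, fun i => kerPencil_ne_top h₁ h₂ (e i), fun x => ?_⟩
    obtain ⟨i, hi⟩ := exists_mem_kerPencil χ ψ x
    exact ⟨e.symm i, by simpa using hi⟩
  · exact iUnion_ne_univ_of_card_le_index (by simpa using hp.one_lt)
      (fun i => by simpa using prime_le_index_of_ne_top hp hk (hf i))
      (Set.iUnion_eq_univ_iff.mpr hcov)
end

section
/- Let A and B be finite rings whose cardinalities are coprime, and let n be a natural number. Then the product ring A × B is the union of n proper two-sided ideals if and only if A is the union of at most n proper two-sided ideals or B is the union of at most n proper two-sided ideals. -/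
theorem zsmul_mul_card_eq_zero {G : Type*} [AddGroup G] (k : ℤ) (x : G) :
    (k * Nat.card G) • x = 0 := by
  rw [mul_zsmul, natCast_zsmul, card_nsmul_eq_zero', zsmul_zero]

namespace AddSubgroup

variable {G H : Type*} [AddGroup G] [AddGroup H]

/-- With `u |G| + v |H| = 1`, multiplication by `u |G|` is the projection of `G × H` onto `H`. -/
theorem mk_zero_mem_of_mk_mem_of_coprime (hcop : (Nat.card G).Coprime (Nat.card H))
    (S : AddSubgroup (G × H)) {a : G} {b : H} (hab : (a, b) ∈ S) : (a, 0) ∈ S := by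
  obtain ⟨u, v, huv⟩ := Nat.isCoprime_iff_coprime.2 hcop
  have hb : (u * Nat.card G) • b = b := by
    rw [← sub_eq_of_eq_add huv.symm, sub_zsmul, one_zsmul, zsmul_mul_card_eq_zero, neg_zero,
      add_zero]
  have h0b : ((0 : G), b) ∈ S := by
    simpa [zsmul_mul_card_eq_zero, hb] using S.zsmul_mem hab (u * Nat.card G)
  simpa using S.sub_mem hab h0b

theorem prod_map_fst_map_snd_of_coprime (hcop : (Nat.card G).Coprime (Nat.card H))
    (S : AddSubgroup (G × H)) :
    (S.map (AddMonoidHom.fst G H)).prod (S.map (AddMonoidHom.snd G H)) = S := by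
  refine le_antisymm ?_ (le_prod_iff.2 ⟨le_rfl, le_rfl⟩)
  rintro ⟨a, b⟩ ⟨⟨⟨a, b'⟩, hab', rfl⟩, ⟨⟨a', b⟩, ha'b, rfl⟩⟩
  have hb : ((0 : G), b) ∈ S := by
    simpa using S.sub_mem ha'b (mk_zero_mem_of_mk_mem_of_coprime hcop S ha'b)
  simpa using S.add_mem (mk_zero_mem_of_mk_mem_of_coprime hcop S hab') hb

theorem map_fst_ne_top_or_map_snd_ne_top_of_coprime
    (hcop : (Nat.card G).Coprime (Nat.card H)) {S : AddSubgroup (G × H)} (hS : S ≠ ⊤) :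
    S.map (AddMonoidHom.fst G H) ≠ ⊤ ∨ S.map (AddMonoidHom.snd G H) ≠ ⊤ := by
  rw [← not_and_or]
  rintro ⟨hfst, hsnd⟩
  rw [← prod_map_fst_map_snd_of_coprime hcop S, hfst, hsnd, top_prod_top] at hS
  exact hS rfl

end AddSubgroup

namespace IsTwoSidedIdeal

variable {R S : Type*} [NonUnitalRing R] [NonUnitalRing S]

theorem comap (φ : R →ₙ+* S) {I : AddSubgroup S} (hI : IsTwoSidedIdeal I) :
    IsTwoSidedIdeal (I.comap (φ : R →+ S)) :=
  ⟨fun r x hx => by simpa using hI.1 (φ r) hx, fun r x hx => by simpa using hI.2 (φ r) hx⟩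

theorem map_of_surjective (φ : R →ₙ+* S) (hφ : Function.Surjective φ) {I : AddSubgroup R}
    (hI : IsTwoSidedIdeal I) : IsTwoSidedIdeal (I.map (φ : R →+ S)) := by
  constructor
  · rintro s _ ⟨x, hx, rfl⟩
    obtain ⟨r, rfl⟩ := hφ s
    exact ⟨r * x, hI.1 r hx, map_mul φ r x⟩
  · rintro s _ ⟨x, hx, rfl⟩
    obtain ⟨r, rfl⟩ := hφ s
    exact ⟨x * r, hI.2 r hx, map_mul φ x r⟩

end IsTwoSidedIdeal

def IsProperIdealCover {ι R : Type*} [NonUnitalRing R] (f : ι → AddSubgroup R) : Prop :=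
  (∀ i, IsTwoSidedIdeal (f i) ∧ f i ≠ ⊤) ∧ ∀ x, ∃ i, x ∈ f i

namespace IsProperIdealCover

variable {ι κ R S : Type*} [NonUnitalRing R] [NonUnitalRing S] {f : ι → AddSubgroup R}

theorem comp_surjective (hf : IsProperIdealCover f) {g : κ → ι}
    (hg : Function.Surjective g) : IsProperIdealCover (f ∘ g) := by
  refine ⟨fun k => hf.1 (g k), fun x => ?_⟩
  obtain ⟨i, hi⟩ := hf.2 x
  obtain ⟨k, rfl⟩ := hg i
  exact ⟨k, hi⟩

theorem comap (hf : IsProperIdealCover f) (φ : S →ₙ+* R) (hφ : Function.Surjective φ) :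
    IsProperIdealCover fun i => (f i).comap (φ : S →+ R) := by
  refine ⟨fun i => ⟨(hf.1 i).1.comap φ, fun htop => (hf.1 i).2 ?_⟩, fun x => hf.2 (φ x)⟩
  rw [AddSubgroup.eq_top_iff']
  intro r
  obtain ⟨s, rfl⟩ := hφ r
  exact AddSubgroup.mem_comap.1 (htop ▸ AddSubgroup.mem_top s)

theorem exists_fin_of_le {m n : ℕ} {f : Fin m → AddSubgroup R} (hf : IsProperIdealCover f)
    (hmn : m ≤ n) : ∃ g : Fin n → AddSubgroup R, IsProperIdealCover g :=
  have : Nonempty (Fin m) := ⟨(hf.2 0).choose⟩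
  ⟨_, hf.comp_surjective (Function.invFun_surjective (Fin.castLE_injective hmn))⟩

theorem exists_fin_of_forall_exists_ne_top_mem [Fintype ι] {n : ℕ} (hι : Fintype.card ι ≤ n)
    (hI : ∀ i, IsTwoSidedIdeal (f i)) (hcov : ∀ x, ∃ i, f i ≠ ⊤ ∧ x ∈ f i) :
    ∃ m ≤ n, ∃ g : Fin m → AddSubgroup R, IsProperIdealCover g := by
  classical
  let e := Fintype.equivFin {i // f i ≠ ⊤}
  refine ⟨_, (Fintype.card_subtype_le _).trans hι, fun k => f (e.symm k),
    fun k => ⟨hI _, (e.symm k).2⟩, fun x => ?_⟩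
  obtain ⟨i, hi, hx⟩ := hcov x
  exact ⟨e ⟨i, hi⟩, by simpa using hx⟩

end IsProperIdealCover

theorem forall_exists_ne_top_mem_or_of_forall_exists_mem_mem {ι G H : Type*} [AddGroup G]
    [AddGroup H] {g : ι → AddSubgroup G} {h : ι → AddSubgroup H}
    (hne : ∀ i, g i ≠ ⊤ ∨ h i ≠ ⊤) (hcov : ∀ a b, ∃ i, a ∈ g i ∧ b ∈ h i) :
    (∀ a, ∃ i, g i ≠ ⊤ ∧ a ∈ g i) ∨ ∀ b, ∃ i, h i ≠ ⊤ ∧ b ∈ h i := by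
  refine or_iff_not_imp_left.2 fun hg b => ?_
  push Not at hg
  obtain ⟨a, ha⟩ := hg
  obtain ⟨i, hai, hbi⟩ := hcov a b
  exact ⟨i, (hne i).resolve_left fun hgi => ha i hgi hai, hbi⟩

theorem prod_ring_ideal_cover_iff_general (A B : Type*) [NonUnitalRing A] [NonUnitalRing B]
    (hcop : Nat.Coprime (Nat.card A) (Nat.card B)) (n : ℕ) :
    (∃ f : Fin n → AddSubgroup (A × B),
      (∀ i, IsTwoSidedIdeal (f i) ∧ f i ≠ ⊤) ∧ ∀ x : A × B, ∃ i, x ∈ f i) ↔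
    ((∃ m ≤ n, ∃ f : Fin m → AddSubgroup A,
        (∀ i, IsTwoSidedIdeal (f i) ∧ f i ≠ ⊤) ∧ ∀ x : A, ∃ i, x ∈ f i) ∨
      (∃ m ≤ n, ∃ f : Fin m → AddSubgroup B,
        (∀ i, IsTwoSidedIdeal (f i) ∧ f i ≠ ⊤) ∧ ∀ x : B, ∃ i, x ∈ f i)) := by
  constructor
  · rintro ⟨f, hf, hcov⟩
    obtain hA | hB := forall_exists_ne_top_mem_or_of_forall_exists_mem_mem
      (fun i => AddSubgroup.map_fst_ne_top_or_map_snd_ne_top_of_coprime hcop (hf i).2)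
      fun a b => (hcov (a, b)).imp fun i hi => ⟨⟨_, hi, rfl⟩, ⟨_, hi, rfl⟩⟩
    · left
      exact IsProperIdealCover.exists_fin_of_forall_exists_ne_top_mem (Fintype.card_fin n).le
        (fun i => (hf i).1.map_of_surjective (NonUnitalRingHom.fst A B) Prod.fst_surjective) hA
    · right
      exact IsProperIdealCover.exists_fin_of_forall_exists_ne_top_mem (Fintype.card_fin n).le
        (fun i => (hf i).1.map_of_surjective (NonUnitalRingHom.snd A B) Prod.snd_surjective) hB
  · rintro (⟨m, hmn, f, hf⟩ | ⟨m, hmn, f, hf⟩)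
    · exact IsProperIdealCover.exists_fin_of_le
        (IsProperIdealCover.comap hf (NonUnitalRingHom.fst A B) Prod.fst_surjective) hmn
    · exact IsProperIdealCover.exists_fin_of_le
        (IsProperIdealCover.comap hf (NonUnitalRingHom.snd A B) Prod.snd_surjective) hmn

/-- For finite rings `A`, `B` of coprime cardinality, the product ring `A × B` is
the union of `n` proper two-sided ideals if and only if `A` or `B` is the union of
at most `n` proper two-sided ideals. -/
theorem prod_ring_ideal_cover_iff (A B : Type*) [NonUnitalRing A] [NonUnitalRing B]
    [Finite A] [Finite B] (hcop : Nat.Coprime (Nat.card A) (Nat.card B)) (n : ℕ) :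
    (∃ f : Fin n → AddSubgroup (A × B),
      (∀ i, IsTwoSidedIdeal (f i) ∧ f i ≠ ⊤) ∧ ∀ x : A × B, ∃ i, x ∈ f i) ↔
    ((∃ m ≤ n, ∃ f : Fin m → AddSubgroup A,
        (∀ i, IsTwoSidedIdeal (f i) ∧ f i ≠ ⊤) ∧ ∀ x : A, ∃ i, x ∈ f i) ∨
      (∃ m ≤ n, ∃ f : Fin m → AddSubgroup B,
        (∀ i, IsTwoSidedIdeal (f i) ∧ f i ≠ ⊤) ∧ ∀ x : B, ∃ i, x ∈ f i)) :=
  prod_ring_ideal_cover_iff_general A B hcop n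
end
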